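/- arXiv:math/0210461 — 2 statements merged into one kernel-verified Lean document; each statement's English description precedes it below -/
import Mathlib

section
/- Let k be a field and H a Hopf algebra over k with bijective antipode (not necessarily commutative) which is left noetherian (in particular this holds when H is finite dimensional), semisimple and cosemisimple. Then every left-right Long dimodule M over H is a direct sum, in the category of Long dimodules, of a family of simple subobjects of M that are finitely generated as H-modules; hence the category of left-right Long dimodules over H is semisimple. -/
/-!
Common definitions for formalizing "Semisimplicity of the categories of
Yetter-Drinfeld modules and Long dimodules" (Caenepeel, Guédénon).
-/

open TensorProduct

noncomputable section
namespace YDPaper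

section RingPart

variable (k H : Type) [CommRing k] [Ring H] [HopfAlgebra k H]

/-- `ρ : M →ₗ[k] M ⊗[k] H` is a (coassociative, counital) right `H`-comodule
structure on `M`. -/
def IsComod {M : Type} [AddCommGroup M] [Module k M] (ρ : M →ₗ[k] M ⊗[k] H) : Prop :=
  (∀ m : M, (TensorProduct.rid k M)
      ((LinearMap.lTensor M (Coalgebra.counit (R := k) (A := H))) (ρ m)) = m) ∧
  (∀ m : M, (TensorProduct.assoc k M H H) ((LinearMap.rTensor H ρ) (ρ m)) =
      (LinearMap.lTensor M (Coalgebra.comul (R := k) (A := H))) (ρ m))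

/-- The iterated comultiplication `h ↦ (h₁ ⊗ h₂) ⊗ h₃`. -/
def Delta2 : H →ₗ[k] (H ⊗[k] H) ⊗[k] H :=
  (LinearMap.rTensor H (Coalgebra.comul (R := k) (A := H))).comp
    (Coalgebra.comul (R := k) (A := H))

/-- The Yetter-Drinfeld compatibility condition
`ρ(h • m) = h₂ • m₀ ⊗ h₃ m₁ S⁻¹(h₁)`, expressed via arbitrary Sweedler
decompositions of `Δ²(h)` and `ρ(m)` into finite sums of pure tensors. -/
def IsYDCompat (Sinv : H →ₗ[k] H) {M : Type} [AddCommGroup M] [Module k M] [Module H M]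
    (ρ : M →ₗ[k] M ⊗[k] H) : Prop :=
  ∀ (h : H) (m : M) (s t : Finset ℕ) (a b c : ℕ → H) (m₀ : ℕ → M) (m₁ : ℕ → H),
    (∑ i ∈ s, (a i ⊗ₜ[k] b i) ⊗ₜ[k] c i) = Delta2 k H h →
    (∑ j ∈ t, m₀ j ⊗ₜ[k] m₁ j) = ρ m →
    ρ (h • m) = ∑ i ∈ s, ∑ j ∈ t, (b i • m₀ j) ⊗ₜ[k] (c i * m₁ j * Sinv (a i))

/-- The `k`-linear map `m ↦ h • m`. -/
def smulMap {M : Type} [AddCommGroup M] [Module k M] [Module H M] [SMulCommClass H k M]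
    (h : H) : M →ₗ[k] M where
  toFun m := h • m
  map_add' := smul_add h
  map_smul' c m := (smul_comm h c m)

/-- The Long dimodule compatibility condition `ρ(h • m) = h • m₀ ⊗ m₁`. -/
def IsLongCompat {M : Type} [AddCommGroup M] [Module k M] [Module H M] [SMulCommClass H k M]
    (ρ : M →ₗ[k] M ⊗[k] H) : Prop :=
  ∀ (h : H) (m : M), ρ (h • m) = (LinearMap.rTensor H (smulMap k H h)) (ρ m)

/-- Morphisms in the categories of Yetter-Drinfeld modules and of Long dimodules:
`H`-linear and `H`-colinear maps. -/
def IsHom {A B : Type} [AddCommGroup A] [Module k A] [Module H A]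
    [AddCommGroup B] [Module k B] [Module H B]
    (ρA : A →ₗ[k] A ⊗[k] H) (ρB : B →ₗ[k] B ⊗[k] H) (f : A →ₗ[k] B) : Prop :=
  (∀ (h : H) (a : A), f (h • a) = h • f a) ∧
  ρB.comp f = (LinearMap.rTensor H f).comp ρA

/-- `H`-colinearity of a `k`-linear map between right `H`-comodules. -/
def IsColin {A B : Type} [AddCommGroup A] [Module k A]
    [AddCommGroup B] [Module k B]
    (ρA : A →ₗ[k] A ⊗[k] H) (ρB : B →ₗ[k] B ⊗[k] H) (f : A →ₗ[k] B) : Prop :=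
  ρB.comp f = (LinearMap.rTensor H f).comp ρA

/-- A bundled left-right Yetter-Drinfeld module over `H` (with chosen inverse `Sinv`
of the antipode). -/
structure YDCat (Sinv : H →ₗ[k] H) where
  M : Type
  [iAdd : AddCommGroup M]
  [iModk : Module k M]
  [iModH : Module H M]
  [iTower : IsScalarTower k H M]
  [iComm : SMulCommClass H k M]
  ρ : M →ₗ[k] M ⊗[k] H
  comod : IsComod k H ρ
  compat : IsYDCompat k H Sinv ρ

attribute [instance] YDCat.iAdd YDCat.iModk YDCat.iModH YDCat.iTower YDCat.iComm

/-- A bundled left-right Long dimodule over `H`. -/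
structure LongCat where
  M : Type
  [iAdd : AddCommGroup M]
  [iModk : Module k M]
  [iModH : Module H M]
  [iTower : IsScalarTower k H M]
  [iComm : SMulCommClass H k M]
  ρ : M →ₗ[k] M ⊗[k] H
  comod : IsComod k H ρ
  compat : IsLongCompat k H ρ

attribute [instance] LongCat.iAdd LongCat.iModk LongCat.iModH LongCat.iTower LongCat.iComm

/-- A bundled right `H`-comodule. -/
structure ComodCat where
  V : Type
  [iAdd : AddCommGroup V]
  [iModk : Module k V]
  ρ : V →ₗ[k] V ⊗[k] H
  comod : IsComod k H ρ

attribute [instance] ComodCat.iAdd ComodCat.iModk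

section Subobjects

variable {k H}
variable {M : Type} [AddCommGroup M] [Module k M] [Module H M] [IsScalarTower k H M]

/-- A subobject in the category of Yetter-Drinfeld modules (or Long dimodules):
an `H`-submodule which is stable under the coaction, i.e. `ρ(p) ⊆ p ⊗ H`. -/
def IsSubobject (ρ : M →ₗ[k] M ⊗[k] H) (p : Submodule H M) : Prop :=
  ∀ m ∈ p, ρ m ∈ LinearMap.range (LinearMap.rTensor H (p.restrictScalars k).subtype)

/-- A simple subobject: a nonzero coaction-stable `H`-submodule with no proper
nonzero coaction-stable `H`-submodules. -/
def IsSimpleSubobject (ρ : M →ₗ[k] M ⊗[k] H) (p : Submodule H M) : Prop :=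
  IsSubobject ρ p ∧ p ≠ ⊥ ∧
    ∀ q : Submodule H M, IsSubobject ρ q → q ≤ p → q = ⊥ ∨ q = p

/-- `M` is the (internal) direct sum of a family of simple subobjects which are
finitely generated as `H`-modules. -/
def IsSemisimpleObj (ρ : M →ₗ[k] M ⊗[k] H) : Prop :=
  ∃ (ι : Type) (S : ι → Submodule H M),
    (∀ i, IsSimpleSubobject ρ (S i) ∧ (S i).FG) ∧
    iSupIndep S ∧ (⨆ i, S i) = ⊤

end Subobjects

section Subcomodules

variable {k H}
variable {V : Type} [AddCommGroup V] [Module k V]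

/-- A subcomodule: a `k`-submodule stable under the coaction. -/
def IsSubcomod (ρ : V →ₗ[k] V ⊗[k] H) (p : Submodule k V) : Prop :=
  ∀ v ∈ p, ρ v ∈ LinearMap.range (LinearMap.rTensor H p.subtype)

/-- A simple subcomodule. -/
def IsSimpleSubcomod (ρ : V →ₗ[k] V ⊗[k] H) (p : Submodule k V) : Prop :=
  IsSubcomod ρ p ∧ p ≠ ⊥ ∧
    ∀ q : Submodule k V, IsSubcomod ρ q → q ≤ p → q = ⊥ ∨ q = p

/-- A comodule is semisimple if it is the internal direct sum of a family of simple
subcomodules. -/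
def IsSemisimpleComod (ρ : V →ₗ[k] V ⊗[k] H) : Prop :=
  ∃ (ι : Type) (S : ι → Submodule k V),
    (∀ i, IsSimpleSubcomod ρ (S i)) ∧ iSupIndep S ∧ (⨆ i, S i) = ⊤

end Subcomodules

/-- `H` is cosemisimple: every right `H`-comodule is a direct sum of simple
subcomodules. -/
def Cosemisimple : Prop := ∀ C : ComodCat k H, IsSemisimpleComod C.ρ

section Coinv

variable {k H}
variable {A B : Type} [AddCommGroup A] [Module k A] [AddCommGroup B] [Module k B]

/-- The coinvariants `M^{co H} = { m | ρ m = m ⊗ 1 }` of a right `H`-comodule. -/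
def coinv (ρ : A →ₗ[k] A ⊗[k] H) : Submodule k A :=
  LinearMap.ker (ρ - (TensorProduct.mk k A H).flip 1)

lemma mem_coinv {ρ : A →ₗ[k] A ⊗[k] H} {a : A} :
    a ∈ coinv ρ ↔ ρ a = a ⊗ₜ[k] (1 : H) := by
  simp [coinv, LinearMap.mem_ker, sub_eq_zero]

/-- The map induced on coinvariants by an `H`-colinear map. -/
def coinvMap {ρA : A →ₗ[k] A ⊗[k] H} {ρB : B →ₗ[k] B ⊗[k] H} (f : A →ₗ[k] B)
    (hf : IsColin k H ρA ρB f) : ↥(coinv ρA) →ₗ[k] ↥(coinv ρB) :=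
  f.restrict (fun a ha => by
    have h1 : ρA a = a ⊗ₜ[k] (1 : H) := mem_coinv.1 ha
    have h2 : ρB (f a) = (LinearMap.rTensor H f) (ρA a) := by
      have := congrArg (fun (g : A →ₗ[k] B ⊗[k] H) => g a) hf
      simpa using this
    rw [mem_coinv, h2, h1, LinearMap.rTensor_tmul])

end Coinv

/-- Exactness of the coinvariants functor on the category of Yetter-Drinfeld
modules. -/
def CoinvExactYD (Sinv : H →ₗ[k] H) : Prop :=
  ∀ (A B C : YDCat k H Sinv) (f : A.M →ₗ[k] B.M) (g : B.M →ₗ[k] C.M)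
    (hf : IsHom k H A.ρ B.ρ f) (hg : IsHom k H B.ρ C.ρ g),
    Function.Injective f → Function.Surjective g →
    LinearMap.range f = LinearMap.ker g →
    Function.Injective (coinvMap f hf.2) ∧
    LinearMap.range (coinvMap f hf.2) = LinearMap.ker (coinvMap g hg.2) ∧
    Function.Surjective (coinvMap g hg.2)

/-- Exactness of the coinvariants functor on the category of right `H`-comodules. -/
def CoinvExactComod : Prop :=
  ∀ (A B C : ComodCat k H) (f : A.V →ₗ[k] B.V) (g : B.V →ₗ[k] C.V)
    (hf : IsColin k H A.ρ B.ρ f) (hg : IsColin k H B.ρ C.ρ g),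
    Function.Injective f → Function.Surjective g →
    LinearMap.range f = LinearMap.ker g →
    Function.Injective (coinvMap f hf) ∧
    LinearMap.range (coinvMap f hf) = LinearMap.ker (coinvMap g hg) ∧
    Function.Surjective (coinvMap g hg)

section Eval

variable {k H}
variable {M N : Type} [AddCommGroup M] [Module k M] [Module H M]
  [IsScalarTower k H M] [SMulCommClass H k M]
  [AddCommGroup N] [Module k N] [Module H N] [IsScalarTower k H N] [SMulCommClass H k N]

/-- Evaluation at `m` of `H`-linear maps, as a `k`-linear map. -/
def evalAtH (m : M) : (M →ₗ[H] N) →ₗ[k] N where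
  toFun f := f m
  map_add' _ _ := rfl
  map_smul' _ _ := rfl

/-- Evaluation at `m` of `k`-linear maps, as a `k`-linear map. -/
def evalAtK {V : Type} [AddCommGroup V] [Module k V] (v : V) :
    (V →ₗ[k] N) →ₗ[k] N where
  toFun f := f v
  map_add' _ _ := rfl
  map_smul' _ _ := rfl

/-- Contraction `N ⊗ H → N` along a functional `φ : H → k`. -/
def contract (φ : H →ₗ[k] k) : N ⊗[k] H →ₗ[k] N :=
  (TensorProduct.rid k N).toLinearMap.comp (LinearMap.lTensor N φ)

/-- Post-composition with an `H`-linear map, as a `k`-linear map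
`Hom_H(X, M) → Hom_H(X, N)`; here `X` is the (implicit) source. -/
def postcompH {X : Type} [AddCommGroup X] [Module k X] [Module H X]
    [IsScalarTower k H X] [SMulCommClass H k X]
    (f : M →ₗ[k] N) (hf : ∀ (h : H) (m : M), f (h • m) = h • f m) :
    (X →ₗ[H] M) →ₗ[k] (X →ₗ[H] N) where
  toFun φ :=
    { toFun := fun x => f (φ x)
      map_add' := fun x y => by simp
      map_smul' := fun h x => by simp [hf] }
  map_add' φ ψ := by ext x; simp
  map_smul' c φ := by ext x; simp

end Eval

/-- Condition (†) for the category of Yetter-Drinfeld modules: for every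
Yetter-Drinfeld module `X` which is finitely generated as a left `H`-module,
the functor `Hom_H(X, -)` is exact on the category of Yetter-Drinfeld modules. -/
def DaggerYD (Sinv : H →ₗ[k] H) : Prop :=
  ∀ X : YDCat k H Sinv, Module.Finite H X.M →
  ∀ (A B C : YDCat k H Sinv) (f : A.M →ₗ[k] B.M) (g : B.M →ₗ[k] C.M)
    (hf : IsHom k H A.ρ B.ρ f) (hg : IsHom k H B.ρ C.ρ g),
    Function.Injective f → Function.Surjective g →
    LinearMap.range f = LinearMap.ker g →
    Function.Injective (postcompH (X := X.M) f hf.1) ∧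
    LinearMap.range (postcompH (X := X.M) f hf.1) =
      LinearMap.ker (postcompH (X := X.M) g hg.1) ∧
    Function.Surjective (postcompH (X := X.M) g hg.1)

/-- Condition (†) for the category of Long dimodules. -/
def DaggerLong : Prop :=
  ∀ X : LongCat k H, Module.Finite H X.M →
  ∀ (A B C : LongCat k H) (f : A.M →ₗ[k] B.M) (g : B.M →ₗ[k] C.M)
    (hf : IsHom k H A.ρ B.ρ f) (hg : IsHom k H B.ρ C.ρ g),
    Function.Injective f → Function.Surjective g →
    LinearMap.range f = LinearMap.ker g →
    Function.Injective (postcompH (X := X.M) f hf.1) ∧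
    LinearMap.range (postcompH (X := X.M) f hf.1) =
      LinearMap.ker (postcompH (X := X.M) g hg.1) ∧
    Function.Surjective (postcompH (X := X.M) g hg.1)

/-- Projective object in the category of Yetter-Drinfeld modules. -/
def IsProjectiveYD (Sinv : H →ₗ[k] H) (P : YDCat k H Sinv) : Prop :=
  ∀ (A B : YDCat k H Sinv) (g : A.M →ₗ[k] B.M) (f : P.M →ₗ[k] B.M),
    IsHom k H A.ρ B.ρ g → Function.Surjective g → IsHom k H P.ρ B.ρ f →
    ∃ l : P.M →ₗ[k] A.M, IsHom k H P.ρ A.ρ l ∧ g.comp l = f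

/-- Projective object in the category of Long dimodules. -/
def IsProjectiveLong (P : LongCat k H) : Prop :=
  ∀ (A B : LongCat k H) (g : A.M →ₗ[k] B.M) (f : P.M →ₗ[k] B.M),
    IsHom k H A.ρ B.ρ g → Function.Surjective g → IsHom k H P.ρ B.ρ f →
    ∃ l : P.M →ₗ[k] A.M, IsHom k H P.ρ A.ρ l ∧ g.comp l = f

/-- Injective object in the category of Yetter-Drinfeld modules. -/
def IsInjectiveYD (Sinv : H →ₗ[k] H) (I : YDCat k H Sinv) : Prop :=
  ∀ (A B : YDCat k H Sinv) (ι : A.M →ₗ[k] B.M) (f : A.M →ₗ[k] I.M),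
    IsHom k H A.ρ B.ρ ι → Function.Injective ι → IsHom k H A.ρ I.ρ f →
    ∃ g : B.M →ₗ[k] I.M, IsHom k H B.ρ I.ρ g ∧ g.comp ι = f

/-- Projective object in the category of right `H`-comodules. -/
def IsProjectiveComod (P : ComodCat k H) : Prop :=
  ∀ (A B : ComodCat k H) (g : A.V →ₗ[k] B.V) (f : P.V →ₗ[k] B.V),
    IsColin k H A.ρ B.ρ g → Function.Surjective g → IsColin k H P.ρ B.ρ f →
    ∃ l : P.V →ₗ[k] A.V, IsColin k H P.ρ A.ρ l ∧ g.comp l = f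

section HomLemmas

variable {k H}
variable {A B C : Type} [AddCommGroup A] [Module k A] [Module H A]
  [AddCommGroup B] [Module k B] [Module H B]
  [AddCommGroup C] [Module k C] [Module H C]

lemma IsHom.comp' {ρA : A →ₗ[k] A ⊗[k] H} {ρB : B →ₗ[k] B ⊗[k] H} {ρC : C →ₗ[k] C ⊗[k] H}
    {f : A →ₗ[k] B} {g : B →ₗ[k] C}
    (hf : IsHom k H ρA ρB f) (hg : IsHom k H ρB ρC g) :
    IsHom k H ρA ρC (g.comp f) := by
  refine ⟨fun h a => by simp [LinearMap.comp_apply, hf.1, hg.1], ?_⟩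
  calc ρC.comp (g.comp f) = (ρC.comp g).comp f := by rw [LinearMap.comp_assoc]
    _ = ((LinearMap.rTensor H g).comp ρB).comp f := by rw [hg.2]
    _ = (LinearMap.rTensor H g).comp (ρB.comp f) := by rw [LinearMap.comp_assoc]
    _ = (LinearMap.rTensor H g).comp ((LinearMap.rTensor H f).comp ρA) := by rw [hf.2]
    _ = ((LinearMap.rTensor H g).comp (LinearMap.rTensor H f)).comp ρA := by
          rw [LinearMap.comp_assoc]
    _ = (LinearMap.rTensor H (g.comp f)).comp ρA := by rw [LinearMap.rTensor_comp]

end HomLemmas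

section HomYD

variable {k H}
variable (Sinv : H →ₗ[k] H)

/-- The `k`-module of morphisms of Yetter-Drinfeld modules `Hom_H^H(A, B)`, as a
submodule of the `k`-linear maps. -/
def homYD (A B : YDCat k H Sinv) : Submodule k (A.M →ₗ[k] B.M) where
  carrier := {f | IsHom k H A.ρ B.ρ f}
  add_mem' := by
    rintro f g ⟨hf1, hf2⟩ ⟨hg1, hg2⟩
    refine ⟨fun h a => by simp [hf1, hg1, smul_add], ?_⟩
    rw [LinearMap.comp_add, LinearMap.rTensor_add, LinearMap.add_comp, hf2, hg2]
  zero_mem' := by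
    refine ⟨fun h a => by simp, ?_⟩
    rw [LinearMap.comp_zero, LinearMap.rTensor_zero, LinearMap.zero_comp]
  smul_mem' := by
    rintro c f ⟨hf1, hf2⟩
    refine ⟨fun h a => by
      rw [LinearMap.smul_apply, LinearMap.smul_apply, hf1, smul_comm], ?_⟩
    rw [LinearMap.comp_smul, LinearMap.rTensor_smul, LinearMap.smul_comp, hf2]

/-- Post-composition with a morphism of Yetter-Drinfeld modules, as a `k`-linear map
between morphism spaces. -/
def postcompYD {X B C : YDCat k H Sinv}
    (g : B.M →ₗ[k] C.M) (hg : IsHom k H B.ρ C.ρ g) :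
    ↥(homYD Sinv X B) →ₗ[k] ↥(homYD Sinv X C) where
  toFun f := ⟨g.comp f.1, IsHom.comp' f.2 hg⟩
  map_add' f g' := by ext x; simp
  map_smul' c f := by ext x; simp

/-- An injective resolution `0 → X → I⁰ → I¹ → ⋯` in the category of
Yetter-Drinfeld modules. -/
structure IsInjRes (X : YDCat k H Sinv) (I : ℕ → YDCat k H Sinv)
    (ε : X.M →ₗ[k] (I 0).M) (d : ∀ n, (I n).M →ₗ[k] (I (n + 1)).M) : Prop where
  eps_hom : IsHom k H X.ρ (I 0).ρ ε
  d_hom : ∀ n, IsHom k H (I n).ρ (I (n + 1)).ρ (d n)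
  inj : ∀ n, IsInjectiveYD k H Sinv (I n)
  mono : Function.Injective ε
  exact0 : LinearMap.range ε = LinearMap.ker (d 0)
  exact : ∀ n, LinearMap.range (d n) = LinearMap.ker (d (n + 1))

/-- A projective resolution `⋯ → P₁ → P₀ → X → 0` in the category of
Yetter-Drinfeld modules. -/
structure IsProjRes (X : YDCat k H Sinv) (P : ℕ → YDCat k H Sinv)
    (ε : (P 0).M →ₗ[k] X.M) (d : ∀ n, (P (n + 1)).M →ₗ[k] (P n).M) : Prop where
  eps_hom : IsHom k H (P 0).ρ X.ρ ε
  d_hom : ∀ n, IsHom k H (P (n + 1)).ρ (P n).ρ (d n)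
  proj : ∀ n, IsProjectiveYD k H Sinv (P n)
  epi : Function.Surjective ε
  exact0 : LinearMap.range (d 0) = LinearMap.ker ε
  exact : ∀ n, LinearMap.range (d (n + 1)) = LinearMap.ker (d n)

/-- The projective dimension of `X` in the category of Yetter-Drinfeld modules is
at most `n`. -/
def pdimLE (X : YDCat k H Sinv) (n : ℕ) : Prop :=
  ∃ (P : ℕ → YDCat k H Sinv) (ε : (P 0).M →ₗ[k] X.M)
    (d : ∀ m, (P (m + 1)).M →ₗ[k] (P m).M),
    IsProjRes Sinv X P ε d ∧ ∀ i, n < i → Subsingleton (P i).M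

/-- The injective dimension of `X` in the category of Yetter-Drinfeld modules is
at most `n`. -/
def injdimLE (X : YDCat k H Sinv) (n : ℕ) : Prop :=
  ∃ (I : ℕ → YDCat k H Sinv) (ε : X.M →ₗ[k] (I 0).M)
    (d : ∀ m, (I m).M →ₗ[k] (I (m + 1)).M),
    IsInjRes Sinv X I ε d ∧ ∀ i, n < i → Subsingleton (I i).M

/-- The complex `Hom(X, I⁰) → Hom(X, I¹) → ⋯` of morphism spaces induced by a
cochain of Yetter-Drinfeld modules. -/
def homCx (X : YDCat k H Sinv) (I : ℕ → YDCat k H Sinv)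
    (d : ∀ n, (I n).M →ₗ[k] (I (n + 1)).M)
    (hd : ∀ n, IsHom k H (I n).ρ (I (n + 1)).ρ (d n)) (n : ℕ) :
    ↥(homYD Sinv X (I n)) →ₗ[k] ↥(homYD Sinv X (I (n + 1))) :=
  postcompYD Sinv (d n) (hd n)

/-- Coboundaries of the induced complex. -/
def boundaries (X : YDCat k H Sinv) (I : ℕ → YDCat k H Sinv)
    (d : ∀ n, (I n).M →ₗ[k] (I (n + 1)).M)
    (hd : ∀ n, IsHom k H (I n).ρ (I (n + 1)).ρ (d n)) :
    ∀ i, Submodule k ↥(homYD Sinv X (I i))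
  | 0 => ⊥
  | (i + 1) => LinearMap.range (homCx Sinv X I d hd i)

/-- The `i`-th cohomology (cocycles modulo coboundaries) of the complex
`Hom(X, I⁰) → Hom(X, I¹) → ⋯`; when `I` is an injective resolution of `Y`, this is
`Ext^i(X, Y)`, the `i`-th right derived functor of `Hom_H^H(X, -)`, in the category
of Yetter-Drinfeld modules. -/
abbrev cohomology (X : YDCat k H Sinv) (I : ℕ → YDCat k H Sinv)
    (d : ∀ n, (I n).M →ₗ[k] (I (n + 1)).M)
    (hd : ∀ n, IsHom k H (I n).ρ (I (n + 1)).ρ (d n)) (i : ℕ) : Type :=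
  ↥(Submodule.map (boundaries Sinv X I d hd i).mkQ
      (LinearMap.ker (homCx Sinv X I d hd i)))

end HomYD

section CharProps

variable {k H}
variable (Sinv : H →ₗ[k] H)

/-- Characterizing property of the coaction on `Hom_H(A, B)` for Yetter-Drinfeld
modules `A`, `B`: it is determined by `f₀(m) ⊗ f₁ = f(m₀)₀ ⊗ f(m₀)₁ S(m₁)`. -/
def HomCoactChar (A B : YDCat k H Sinv)
    (ρQ : (A.M →ₗ[H] B.M) →ₗ[k] (A.M →ₗ[H] B.M) ⊗[k] H) : Prop :=
  ∀ (f : A.M →ₗ[H] B.M) (m : A.M) (t : Finset ℕ) (m₀ : ℕ → A.M) (m₁ : ℕ → H),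
    (∑ j ∈ t, m₀ j ⊗ₜ[k] m₁ j) = A.ρ m →
    (LinearMap.rTensor H (evalAtH (N := B.M) m)) (ρQ f) =
      ∑ j ∈ t, (LinearMap.lTensor B.M
          (LinearMap.mulRight k (HopfAlgebra.antipode (R := k) (A := H) (m₁ j))))
        (B.ρ (f (m₀ j)))

/-- Characterizing property of the coaction on `Hom_k(V, B)` for a comodule `V` and
a Yetter-Drinfeld module `B`: `g₀(v) ⊗ g₁ = g(v₀)₀ ⊗ g(v₀)₁ S(v₁)`. -/
def HomKCoactChar (V : ComodCat k H) (B : YDCat k H Sinv)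
    (ρ' : (V.V →ₗ[k] B.M) →ₗ[k] (V.V →ₗ[k] B.M) ⊗[k] H) : Prop :=
  ∀ (g : V.V →ₗ[k] B.M) (v : V.V) (t : Finset ℕ) (v₀ : ℕ → V.V) (v₁ : ℕ → H),
    (∑ j ∈ t, v₀ j ⊗ₜ[k] v₁ j) = V.ρ v →
    (LinearMap.rTensor H (evalAtK (N := B.M) v)) (ρ' g) =
      ∑ j ∈ t, (LinearMap.lTensor B.M
          (LinearMap.mulRight k (HopfAlgebra.antipode (R := k) (A := H) (v₁ j))))
        (B.ρ (g (v₀ j)))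

/-- Characterizing property of the Yetter-Drinfeld coaction on `H ⊗ V`:
`ρ(h ⊗ v) = h₂ ⊗ v₀ ⊗ h₃ v₁ S⁻¹(h₁)`. -/
def HTensorYDChar (V : ComodCat k H)
    (ρT : (H ⊗[k] V.V) →ₗ[k] (H ⊗[k] V.V) ⊗[k] H) : Prop :=
  ∀ (h : H) (v : V.V) (s t : Finset ℕ) (a b c : ℕ → H) (v₀ : ℕ → V.V) (v₁ : ℕ → H),
    (∑ i ∈ s, (a i ⊗ₜ[k] b i) ⊗ₜ[k] c i) = Delta2 k H h →
    (∑ j ∈ t, v₀ j ⊗ₜ[k] v₁ j) = V.ρ v →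
    ρT (h ⊗ₜ[k] v) =
      ∑ i ∈ s, ∑ j ∈ t, (b i ⊗ₜ[k] v₀ j) ⊗ₜ[k] (c i * v₁ j * Sinv (a i))

/-- Characterizing property of the Long dimodule coaction on `H ⊗ V`:
`ρ(h ⊗ v) = h ⊗ v₀ ⊗ v₁`. -/
def HTensorLongChar (V : ComodCat k H)
    (ρT : (H ⊗[k] V.V) →ₗ[k] (H ⊗[k] V.V) ⊗[k] H) : Prop :=
  ∀ (h : H) (v : V.V) (t : Finset ℕ) (v₀ : ℕ → V.V) (v₁ : ℕ → H),
    (∑ j ∈ t, v₀ j ⊗ₜ[k] v₁ j) = V.ρ v →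
    ρT (h ⊗ₜ[k] v) = ∑ j ∈ t, (h ⊗ₜ[k] v₀ j) ⊗ₜ[k] v₁ j

end CharProps

end RingPart

section CommPart

variable {k H : Type} [CommRing k] [CommRing H] [HopfAlgebra k H] (Sinv : H →ₗ[k] H)

/-- Characterizing property of the Yetter-Drinfeld coaction on `M ⊗_H N`:
`ρ(m ⊗ n) = m₀ ⊗ n₀ ⊗ n₁ m₁` (for `H` commutative). -/
def TensorCoactChar (A B : YDCat k H Sinv)
    (ρT : (A.M ⊗[H] B.M) →ₗ[k] (A.M ⊗[H] B.M) ⊗[k] H) : Prop :=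
  ∀ (m : A.M) (n : B.M) (s t : Finset ℕ) (m₀ : ℕ → A.M) (m₁ : ℕ → H)
    (n₀ : ℕ → B.M) (n₁ : ℕ → H),
    (∑ i ∈ s, m₀ i ⊗ₜ[k] m₁ i) = A.ρ m →
    (∑ j ∈ t, n₀ j ⊗ₜ[k] n₁ j) = B.ρ n →
    ρT (m ⊗ₜ[H] n) =
      ∑ i ∈ s, ∑ j ∈ t, (m₀ i ⊗ₜ[H] n₀ j) ⊗ₜ[k] (n₁ j * m₁ i)

/-- Restriction along `v ↦ 1 ⊗ v`, i.e. the canonical map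
`Hom_H(H ⊗ V, N) → Hom_k(V, N)`, `f ↦ (v ↦ f(1 ⊗ v))`. -/
def resUnitMap (V : Type) [AddCommGroup V] [Module k V] (N : Type) [AddCommGroup N]
    [Module k N] [Module H N] [IsScalarTower k H N] [SMulCommClass H k N] :
    ((H ⊗[k] V) →ₗ[H] N) →ₗ[k] (V →ₗ[k] N) where
  toFun f := (f.restrictScalars k).comp ((TensorProduct.mk k H V) 1)
  map_add' f g := by ext v; rfl
  map_smul' c f := by ext v; rfl

end CommPart


section Proof1

open Coalgebra HopfAlgebra LinearMap

variable {k H : Type} [Field k] [Ring H] [HopfAlgebra k H]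

set_option linter.unusedSectionVars false

section TensorAux

variable {M N : Type} [AddCommGroup M] [Module k M] [AddCommGroup N] [Module k N]

/-- Contraction of the `H`-leg along a functional. -/
def ctr (φ : H →ₗ[k] k) : M ⊗[k] H →ₗ[k] M :=
  (TensorProduct.rid k M).toLinearMap ∘ₗ LinearMap.lTensor M φ

@[simp] lemma ctr_tmul (φ : H →ₗ[k] k) (m : M) (h : H) :
    ctr φ (m ⊗ₜ[k] h) = φ h • m := by
  simp [ctr]

lemma ctr_rTensor (φ : H →ₗ[k] k) (f : M →ₗ[k] N) (x : M ⊗[k] H) :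
    ctr φ (LinearMap.rTensor H f x) = f (ctr φ x) := by
  induction x using TensorProduct.induction_on with
  | zero => simp
  | tmul m h => simp
  | add x y hx hy => simp [hx, hy]

variable {ι : Type*} (bH : Module.Basis ι k H)

lemma rep_exists (x : M ⊗[k] H) :
    ∃ s : Finset ι, (∀ i ∉ s, ctr (bH.coord i) x = 0) ∧
      x = ∑ i ∈ s, ctr (bH.coord i) x ⊗ₜ[k] bH i := by
  induction x using TensorProduct.induction_on with
  | zero => exact ⟨∅, fun i _ => by simp, by simp⟩
  | tmul m h =>
      refine ⟨(bH.repr h).support, fun i hi => ?_, ?_⟩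
      · simp [Module.Basis.coord_apply, Finsupp.notMem_support_iff.1 hi]
      · have : ∑ i ∈ (bH.repr h).support, ctr (bH.coord i) (m ⊗ₜ[k] h) ⊗ₜ[k] bH i
            = m ⊗ₜ[k] ∑ i ∈ (bH.repr h).support, (bH.repr h) i • bH i := by
          rw [TensorProduct.tmul_sum]
          refine Finset.sum_congr rfl fun i _ => ?_
          simp [Module.Basis.coord_apply, TensorProduct.smul_tmul]
        rw [this]
        congr 1
        conv_lhs => rw [← bH.linearCombination_repr h]
        rw [Finsupp.linearCombination_apply, Finsupp.sum]
  | add x y hx hy =>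
      classical
      obtain ⟨s, hs0, hs⟩ := hx
      obtain ⟨t, ht0, ht⟩ := hy
      refine ⟨s ∪ t, fun i hi => ?_, ?_⟩
      · simp only [Finset.mem_union, not_or] at hi
        simp [hs0 i hi.1, ht0 i hi.2]
      · have hx' : x = ∑ i ∈ s ∪ t, ctr (bH.coord i) x ⊗ₜ[k] bH i := by
          conv_lhs => rw [hs]
          exact Finset.sum_subset Finset.subset_union_left (fun i _ hi => by
            rw [hs0 i hi]; simp)
        have hy' : y = ∑ i ∈ s ∪ t, ctr (bH.coord i) y ⊗ₜ[k] bH i := by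
          conv_lhs => rw [ht]
          exact Finset.sum_subset Finset.subset_union_right (fun i _ hi => by
            rw [ht0 i hi]; simp)
        calc x + y = (∑ i ∈ s ∪ t, ctr (bH.coord i) x ⊗ₜ[k] bH i)
              + ∑ i ∈ s ∪ t, ctr (bH.coord i) y ⊗ₜ[k] bH i := by rw [← hx', ← hy']
          _ = ∑ i ∈ s ∪ t, ctr (bH.coord i) (x + y) ⊗ₜ[k] bH i := by
              rw [← Finset.sum_add_distrib]
              exact Finset.sum_congr rfl fun i _ => by
                rw [map_add, TensorProduct.add_tmul]

lemma mem_range_rTensor_iff (p : Submodule k M) (x : M ⊗[k] H) :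
    x ∈ LinearMap.range (LinearMap.rTensor H p.subtype) ↔
      ∀ i, ctr (bH.coord i) x ∈ p := by
  constructor
  · rintro ⟨y, rfl⟩ i
    rw [ctr_rTensor]
    exact (ctr (bH.coord i) y).2
  · intro hx
    obtain ⟨s, -, hrep⟩ := rep_exists bH x
    refine ⟨∑ i ∈ s, (⟨ctr (bH.coord i) x, hx i⟩ : p) ⊗ₜ[k] bH i, ?_⟩
    rw [map_sum]
    conv_rhs => rw [hrep]
    exact Finset.sum_congr rfl fun i _ => by simp

lemma range_rTensor_mono {p q : Submodule k M} (hpq : p ≤ q) {x : M ⊗[k] H}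
    (hx : x ∈ LinearMap.range (LinearMap.rTensor H p.subtype)) :
    x ∈ LinearMap.range (LinearMap.rTensor H q.subtype) := by
  have bH := Module.Basis.ofVectorSpace k H
  rw [mem_range_rTensor_iff bH] at hx ⊢
  exact fun i => hpq (hx i)

lemma range_rTensor_map {p : Submodule k M} {r : Submodule k N} (f : M →ₗ[k] N)
    (hf : ∀ x ∈ p, f x ∈ r) {x : M ⊗[k] H}
    (hx : x ∈ LinearMap.range (LinearMap.rTensor H p.subtype)) :
    LinearMap.rTensor H f x ∈ LinearMap.range (LinearMap.rTensor H r.subtype) := by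
  have bH := Module.Basis.ofVectorSpace k H
  rw [mem_range_rTensor_iff bH] at hx ⊢
  intro i
  rw [ctr_rTensor]
  exact hf _ (hx i)

end TensorAux


section Subcomod

variable {V : Type} [AddCommGroup V] [Module k V]

lemma IsSubcomod.inf {ρ : V →ₗ[k] V ⊗[k] H} {p q : Submodule k V}
    (hp : IsSubcomod ρ p) (hq : IsSubcomod ρ q) : IsSubcomod ρ (p ⊓ q) := by
  intro v hv
  have bH := Module.Basis.ofVectorSpace k H
  rw [mem_range_rTensor_iff bH]
  intro i
  exact ⟨(mem_range_rTensor_iff bH p _).1 (hp v hv.1) i,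
    (mem_range_rTensor_iff bH q _).1 (hq v hv.2) i⟩

lemma IsSubcomod.sup {ρ : V →ₗ[k] V ⊗[k] H} {p q : Submodule k V}
    (hp : IsSubcomod ρ p) (hq : IsSubcomod ρ q) : IsSubcomod ρ (p ⊔ q) := by
  intro v hv
  obtain ⟨a, ha, b, hb, rfl⟩ := Submodule.mem_sup.1 hv
  rw [map_add]
  exact add_mem (range_rTensor_mono le_sup_left (hp a ha))
    (range_rTensor_mono le_sup_right (hq b hb))

lemma IsSubcomod.iSup {ρ : V →ₗ[k] V ⊗[k] H} {ι' : Sort*} {S : ι' → Submodule k V}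
    (hS : ∀ i, IsSubcomod ρ (S i)) : IsSubcomod ρ (⨆ i, S i) := by
  intro v hv
  refine Submodule.iSup_induction S
    (motive := fun x => ρ x ∈ LinearMap.range (LinearMap.rTensor H (⨆ i, S i).subtype)) hv ?_ ?_ ?_
  · intro i x hx
    exact range_rTensor_mono (le_iSup S i) (hS i x hx)
  · simp
  · intro x y hx hy; rw [map_add]; exact add_mem hx hy

lemma IsSubcomod.sSup {ρ : V →ₗ[k] V ⊗[k] H} {C : Set (Submodule k V)}
    (hC : ∀ p ∈ C, IsSubcomod ρ p) : IsSubcomod ρ (sSup C) := by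
  rw [sSup_eq_iSup']
  exact IsSubcomod.iSup fun p => hC p p.2

lemma subcomod_compl (ρ : V →ₗ[k] V ⊗[k] H) (hsemi : IsSemisimpleComod ρ)
    {p : Submodule k V} (hp : IsSubcomod ρ p) :
    ∃ q : Submodule k V, IsSubcomod ρ q ∧ IsCompl p q := by
  obtain ⟨ι', S, hsimp, -, hsup⟩ := hsemi
  set Q : Set (Submodule k V) := {q | IsSubcomod ρ q ∧ Disjoint p q} with hQ
  have hbot : (⊥ : Submodule k V) ∈ Q := by
    refine ⟨fun v hv => ?_, disjoint_bot_right⟩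
    rw [(Submodule.mem_bot k).1 hv, map_zero]
    exact zero_mem _
  obtain ⟨q, -, hqmax⟩ := zorn_le_nonempty₀ Q (fun c hcQ hchain y hy => by
    refine ⟨sSup c, ⟨IsSubcomod.sSup fun r hr => (hcQ hr).1, ?_⟩, fun z hz => le_sSup hz⟩
    rw [Submodule.disjoint_def]
    intro x hxp hxs
    obtain ⟨z, hzc, hxz⟩ := (Submodule.mem_sSup_of_directed ⟨y, hy⟩
      (hchain.directedOn)).1 hxs
    exact Submodule.disjoint_def.1 (hcQ hzc).2 x hxp hxz) ⊥ hbot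
  have hq := hqmax.prop
  refine ⟨q, hq.1, hq.2, ?_⟩
  rw [codisjoint_iff]
  by_contra hne
  have : ∃ i, ¬ S i ≤ p ⊔ q := by
    by_contra hall
    push_neg at hall
    exact hne (top_unique (hsup ▸ iSup_le hall))
  obtain ⟨i, hSi⟩ := this
  obtain ⟨hsub_i, hne_i, hmin_i⟩ := hsimp i
  have hd : S i ⊓ (p ⊔ q) = ⊥ ∨ S i ⊓ (p ⊔ q) = S i :=
    hmin_i _ (IsSubcomod.inf hsub_i (IsSubcomod.sup hp hq.1)) inf_le_left
  rcases hd with hd | hd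
  · have hdisj : Disjoint (p ⊔ q) (S i) := by
      rw [disjoint_iff, inf_comm]; exact hd
    have hd2 : Disjoint p (q ⊔ S i) :=
      hq.2.disjoint_sup_right_of_disjoint_sup_left hdisj
    have hmem : q ⊔ S i ∈ Q := ⟨IsSubcomod.sup hq.1 hsub_i, hd2⟩
    have := hqmax.le_of_ge hmem le_sup_left
    exact hSi (le_trans (le_trans le_sup_right this) le_sup_right)
  · exact hSi (by rw [← hd]; exact inf_le_right)

end Subcomod

section Integral

lemma isComod_comul : IsComod k H (Coalgebra.comul (R := k) (A := H)) := by
  constructor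
  · intro h
    have := Coalgebra.lTensor_counit_comul (R := k) h
    rw [show (Coalgebra.counit (R := k) (A := H)).lTensor H
      = LinearMap.lTensor H (Coalgebra.counit (R := k)) from rfl] at this
    rw [this]
    simp
  · intro h
    exact Coalgebra.coassoc_apply h

lemma exists_integral [Nontrivial H] (hcoss : Cosemisimple k H) :
    ∃ lam : H →ₗ[k] k, lam 1 = 1 ∧
      ∀ a : H, LinearMap.rTensor H (LinearMap.toSpanSingleton k H 1 ∘ₗ lam)
          (Coalgebra.comul a) = lam a • ((1:H) ⊗ₜ[k] (1:H)) := by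
  set p1 : Submodule k H := Submodule.span k {(1:H)} with hp1def
  have h1mem : (1:H) ∈ p1 := Submodule.mem_span_singleton_self 1
  have hp1 : IsSubcomod (Coalgebra.comul (R := k) (A := H)) p1 := by
    intro v hv
    obtain ⟨c, rfl⟩ := Submodule.mem_span_singleton.1 hv
    refine ⟨c • ((⟨1, h1mem⟩ : p1) ⊗ₜ[k] (1:H)), ?_⟩
    rw [map_smul, map_smul]
    rw [LinearMap.rTensor_tmul]
    simp [Bialgebra.comul_one, Algebra.TensorProduct.one_def]
  have hsemi : IsSemisimpleComod (Coalgebra.comul (R := k) (A := H)) :=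
    hcoss { V := H, ρ := Coalgebra.comul, comod := isComod_comul }
  obtain ⟨q, hq, hcompl⟩ := subcomod_compl _ hsemi hp1
  set e : H →ₗ[k] H := p1.subtype ∘ₗ p1.projectionOnto q hcompl with he_def
  have he_p : ∀ x ∈ p1, e x = x := fun x hx => by
    simp only [he_def, LinearMap.comp_apply]
    rw [show x = ((⟨x, hx⟩ : p1) : H) from rfl,
      Submodule.projectionOnto_apply_left hcompl ⟨x, hx⟩]
    rfl
  have he_q : ∀ x ∈ q, e x = 0 := fun x hx => by
    simp only [he_def, LinearMap.comp_apply]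
    rw [show x = ((⟨x, hx⟩ : q) : H) from rfl,
      Submodule.projectionOnto_apply_right hcompl ⟨x, hx⟩]
    simp
  have hcolin : ∀ h : H, LinearMap.rTensor H e (Coalgebra.comul h)
      = Coalgebra.comul (e h) := by
    intro h
    have hh : h ∈ p1 ⊔ q := by rw [hcompl.codisjoint.eq_top]; trivial
    obtain ⟨a, ha, b, hb, rfl⟩ := Submodule.mem_sup.1 hh
    obtain ⟨ξ, hξ⟩ := hp1 a ha
    obtain ⟨ζ, hζ⟩ := hq b hb
    have hep : e ∘ₗ p1.subtype = p1.subtype := by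
      ext x; exact he_p x x.2
    have heq : e ∘ₗ q.subtype = 0 := by
      ext x; exact he_q x x.2
    rw [map_add, map_add, ← hξ, ← hζ, ← LinearMap.comp_apply, ← LinearMap.comp_apply,
      ← LinearMap.rTensor_comp, ← LinearMap.rTensor_comp, hep, heq, hξ]
    rw [map_add e a b, he_p a ha, he_q b hb, add_zero]
    simp
  have hinj : Function.Injective (LinearMap.toSpanSingleton k H 1) := by
    intro c d hcd
    simp only [LinearMap.toSpanSingleton_apply] at hcd
    rw [← Algebra.algebraMap_eq_smul_one, ← Algebra.algebraMap_eq_smul_one] at hcd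
    exact (algebraMap k H).injective hcd
  set equiv : k ≃ₗ[k] p1 := (LinearEquiv.ofInjective _ hinj).trans
    (LinearEquiv.ofEq _ _ (LinearMap.span_singleton_eq_range k H 1).symm) with hequiv
  have hequiv_apply : ∀ c : k, ((equiv c : p1) : H) = c • (1:H) := fun c => rfl
  set lam : H →ₗ[k] k := (equiv.symm : p1 →ₗ[k] k) ∘ₗ p1.projectionOnto q hcompl
    with hlam
  have key : ∀ h : H, e h = lam h • 1 := by
    intro h
    rw [← hequiv_apply (lam h)]
    simp only [hlam, LinearMap.comp_apply, LinearEquiv.coe_coe, LinearEquiv.apply_symm_apply]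
    rfl
  have lam1 : lam 1 = 1 := by
    apply hinj
    simp only [LinearMap.toSpanSingleton_apply]
    rw [← key 1, he_p 1 h1mem, one_smul]
  refine ⟨lam, lam1, fun a => ?_⟩
  have hts : LinearMap.toSpanSingleton k H 1 ∘ₗ lam = e := by
    ext h
    simp only [LinearMap.comp_apply, LinearMap.toSpanSingleton_apply]
    exact (key h).symm
  rw [hts, hcolin a, key a, map_smul]
  rw [show Coalgebra.comul (R := k) (1:H) = (1 : H ⊗[k] H) from Bialgebra.comul_one]
  rw [Algebra.TensorProduct.one_def]

lemma integral_sum_smul {lam : H →ₗ[k] k}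
    (hinv : ∀ a : H, LinearMap.rTensor H (LinearMap.toSpanSingleton k H 1 ∘ₗ lam)
      (Coalgebra.comul a) = lam a • ((1:H) ⊗ₜ[k] (1:H)))
    (a : H) {ι' : Type*} (s : Finset ι') (u v : ι' → H)
    (hrep : ∑ i ∈ s, u i ⊗ₜ[k] v i = Coalgebra.comul a) :
    ∑ i ∈ s, lam (u i) • v i = lam a • (1:H) := by
  have h := hinv a
  rw [← hrep, map_sum] at h
  apply_fun LinearMap.mul' k H at h
  rw [map_sum] at h
  simp only [LinearMap.rTensor_tmul, LinearMap.comp_apply,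
    LinearMap.toSpanSingleton_apply, map_smul, LinearMap.mul'_apply,
    smul_mul_assoc, one_mul] at h
  exact h

end Integral


section Conv

/-- Convolution product on `Hom(H, H ⊗ H)`. -/
def conv (f g : H →ₗ[k] H ⊗[k] H) : H →ₗ[k] H ⊗[k] H :=
  LinearMap.mul' k (H ⊗[k] H) ∘ₗ TensorProduct.map f g ∘ₗ Coalgebra.comul

/-- Convolution unit. -/
def cunit : H →ₗ[k] H ⊗[k] H :=
  Algebra.linearMap k (H ⊗[k] H) ∘ₗ Coalgebra.counit

lemma conv_apply_repr (f g : H →ₗ[k] H ⊗[k] H) (a : H) (r : Coalgebra.Repr k a (H × H)) :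
    conv f g a = ∑ i ∈ r.index, f (r.left i) * g (r.right i) := by
  simp only [conv, LinearMap.comp_apply, ← r.eq, map_sum, TensorProduct.map_tmul,
    LinearMap.mul'_apply]

lemma sum_counit_smul (a : H) (r : Coalgebra.Repr k a (H × H)) :
    ∑ i ∈ r.index, Coalgebra.counit (R := k) (r.left i) • r.right i = a := by
  have h := Coalgebra.sum_counit_tmul_eq r
  calc ∑ i ∈ r.index, Coalgebra.counit (R := k) (r.left i) • r.right i
      = TensorProduct.lid k H (∑ i ∈ r.index,
          Coalgebra.counit (R := k) (r.left i) ⊗ₜ[k] r.right i) := by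
        rw [map_sum]; exact Finset.sum_congr rfl fun i _ => by simp
    _ = a := by rw [h]; simp

lemma sum_smul_counit (a : H) (r : Coalgebra.Repr k a (H × H)) :
    ∑ i ∈ r.index, Coalgebra.counit (R := k) (r.right i) • r.left i = a := by
  have h := Coalgebra.sum_tmul_counit_eq r
  calc ∑ i ∈ r.index, Coalgebra.counit (R := k) (r.right i) • r.left i
      = TensorProduct.rid k H (∑ i ∈ r.index,
          r.left i ⊗ₜ[k] Coalgebra.counit (R := k) (r.right i)) := by
        rw [map_sum]; exact Finset.sum_congr rfl fun i _ => by simp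
    _ = a := by rw [h]; simp

lemma conv_cunit_right (f : H →ₗ[k] H ⊗[k] H) : conv f cunit = f := by
  ext a
  rw [conv_apply_repr f cunit a (Coalgebra.Repr.arbitrary k a)]
  have : ∀ i ∈ (Coalgebra.Repr.arbitrary k a).index,
      f ((Coalgebra.Repr.arbitrary k a).left i) * cunit ((Coalgebra.Repr.arbitrary k a).right i)
      = Coalgebra.counit (R := k) ((Coalgebra.Repr.arbitrary k a).right i) •
          f ((Coalgebra.Repr.arbitrary k a).left i) := by
    intro i _
    rw [cunit, LinearMap.comp_apply, Algebra.linearMap_apply, Algebra.algebraMap_eq_smul_one,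
      mul_smul_comm, mul_one]
  rw [Finset.sum_congr rfl this,
    show ∑ i ∈ (Coalgebra.Repr.arbitrary k a).index,
        Coalgebra.counit (R := k) ((Coalgebra.Repr.arbitrary k a).right i) •
          f ((Coalgebra.Repr.arbitrary k a).left i)
      = f (∑ i ∈ (Coalgebra.Repr.arbitrary k a).index,
          Coalgebra.counit (R := k) ((Coalgebra.Repr.arbitrary k a).right i) •
            (Coalgebra.Repr.arbitrary k a).left i) from by
        rw [map_sum]; exact Finset.sum_congr rfl fun i _ => (map_smul f _ _).symm,
    sum_smul_counit a _]

lemma conv_cunit_left (f : H →ₗ[k] H ⊗[k] H) : conv cunit f = f := by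
  ext a
  rw [conv_apply_repr cunit f a (Coalgebra.Repr.arbitrary k a)]
  have : ∀ i ∈ (Coalgebra.Repr.arbitrary k a).index,
      cunit ((Coalgebra.Repr.arbitrary k a).left i) * f ((Coalgebra.Repr.arbitrary k a).right i)
      = Coalgebra.counit (R := k) ((Coalgebra.Repr.arbitrary k a).left i) •
          f ((Coalgebra.Repr.arbitrary k a).right i) := by
    intro i _
    rw [cunit, LinearMap.comp_apply, Algebra.linearMap_apply, Algebra.algebraMap_eq_smul_one,
      smul_mul_assoc, one_mul]
  rw [Finset.sum_congr rfl this,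
    show ∑ i ∈ (Coalgebra.Repr.arbitrary k a).index,
        Coalgebra.counit (R := k) ((Coalgebra.Repr.arbitrary k a).left i) •
          f ((Coalgebra.Repr.arbitrary k a).right i)
      = f (∑ i ∈ (Coalgebra.Repr.arbitrary k a).index,
          Coalgebra.counit (R := k) ((Coalgebra.Repr.arbitrary k a).left i) •
            (Coalgebra.Repr.arbitrary k a).right i) from by
        rw [map_sum]; exact Finset.sum_congr rfl fun i _ => (map_smul f _ _).symm,
    sum_counit_smul a _]

lemma conv_assoc (f g h : H →ₗ[k] H ⊗[k] H) :
    conv (conv f g) h = conv f (conv g h) := by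
  ext a
  set r := Coalgebra.Repr.arbitrary k a with hr
  set r1 : ∀ i : H × H, Coalgebra.Repr k (r.left i) (H × H) := fun i => Coalgebra.Repr.arbitrary k _
  set r2 : ∀ i : H × H, Coalgebra.Repr k (r.right i) (H × H) := fun i => Coalgebra.Repr.arbitrary k _
  have key := Coalgebra.sum_tmul_tmul_eq r r1 r2
  apply_fun (TensorProduct.map f (TensorProduct.map g h)) at key
  rw [map_sum, map_sum] at key
  simp only [Finset.sum_congr, map_sum, TensorProduct.map_tmul] at key
  apply_fun (LinearMap.mul' k (H ⊗[k] H) ∘ₗ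
    LinearMap.lTensor (H ⊗[k] H) (LinearMap.mul' k (H ⊗[k] H))) at key
  rw [map_sum, map_sum] at key
  simp only [LinearMap.comp_apply, LinearMap.lTensor_tmul, map_sum,
    TensorProduct.tmul_sum, LinearMap.mul'_apply] at key
  rw [conv_apply_repr (conv f g) h a r, conv_apply_repr f (conv g h) a r]
  calc ∑ i ∈ r.index, conv f g (r.left i) * h (r.right i)
      = ∑ i ∈ r.index, ∑ j ∈ (r1 i).index,
          f ((r1 i).left j) * (g ((r1 i).right j) * h (r.right i)) := by
        refine Finset.sum_congr rfl fun i _ => ?_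
        rw [conv_apply_repr f g _ (r1 i), Finset.sum_mul]
        exact Finset.sum_congr rfl fun j _ => mul_assoc _ _ _
    _ = ∑ i ∈ r.index, ∑ j ∈ (r2 i).index,
          f (r.left i) * (g ((r2 i).left j) * h ((r2 i).right j)) := key
    _ = ∑ i ∈ r.index, f (r.left i) * conv g h (r.right i) := by
        refine Finset.sum_congr rfl fun i _ => ?_
        rw [conv_apply_repr g h _ (r2 i), Finset.mul_sum]

/-- `τ ∘ (S ⊗ S) ∘ Δ`. -/
def antipodeFlip : H →ₗ[k] H ⊗[k] H :=
  (TensorProduct.comm k H H).toLinearMap ∘ₗ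
    TensorProduct.map (HopfAlgebra.antipode (R := k)) (HopfAlgebra.antipode (R := k)) ∘ₗ
      Coalgebra.comul

lemma conv_comulS :
    conv (Coalgebra.comul ∘ₗ HopfAlgebra.antipode (R := k) (A := H)) Coalgebra.comul
      = cunit := by
  ext a
  rw [conv_apply_repr _ _ a (Coalgebra.Repr.arbitrary k a)]
  have : ∀ i ∈ (Coalgebra.Repr.arbitrary k a).index,
      (Coalgebra.comul ∘ₗ HopfAlgebra.antipode (R := k) (A := H))
          ((Coalgebra.Repr.arbitrary k a).left i) *
        Coalgebra.comul ((Coalgebra.Repr.arbitrary k a).right i)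
      = Coalgebra.comul (R := k)
          (HopfAlgebra.antipode (R := k) ((Coalgebra.Repr.arbitrary k a).left i) *
            (Coalgebra.Repr.arbitrary k a).right i) := by
    intro i _
    rw [LinearMap.comp_apply, Bialgebra.comul_mul]
  rw [Finset.sum_congr rfl this, ← map_sum,
    HopfAlgebra.sum_antipode_mul_eq_algebraMap_counit (Coalgebra.Repr.arbitrary k a),
    Bialgebra.comul_algebraMap]
  rfl

/-- The key contraction map used to prove anti-comultiplicativity of the antipode. -/
def Wmap : (H ⊗[k] H) ⊗[k] (H ⊗[k] H) →ₗ[k] H ⊗[k] H :=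
  TensorProduct.map (LinearMap.mul' k H) (LinearMap.mul' k H) ∘ₗ
    (TensorProduct.tensorTensorTensorComm k H H H H).toLinearMap ∘ₗ
      LinearMap.lTensor (H ⊗[k] H)
        ((TensorProduct.comm k H H).toLinearMap ∘ₗ
          TensorProduct.map (HopfAlgebra.antipode (R := k)) (HopfAlgebra.antipode (R := k)))

lemma Wmap_tmul (x y u v : H) :
    Wmap ((x ⊗ₜ[k] y) ⊗ₜ[k] (u ⊗ₜ[k] v))
      = (x * HopfAlgebra.antipode (R := k) v) ⊗ₜ[k] (y * HopfAlgebra.antipode (R := k) u) := by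
  simp [Wmap, TensorProduct.tensorTensorTensorComm_tmul]

lemma Wmap_mul (u w : H ⊗[k] H) :
    Wmap (u ⊗ₜ[k] w) = u * (TensorProduct.comm k H H)
      (TensorProduct.map (HopfAlgebra.antipode (R := k)) (HopfAlgebra.antipode (R := k)) w) := by
  induction u using TensorProduct.induction_on with
  | zero => simp [TensorProduct.zero_tmul]
  | tmul x y =>
      induction w using TensorProduct.induction_on with
      | zero => simp
      | tmul u' v' => rw [Wmap_tmul]; simp [Algebra.TensorProduct.tmul_mul_tmul]
      | add w1 w2 h1 h2 =>
          rw [TensorProduct.tmul_add, map_add, h1, h2, map_add, map_add, mul_add]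
  | add u1 u2 h1 h2 =>
      rw [TensorProduct.add_tmul, map_add, h1, h2, add_mul]

end Conv


section ACO

/-- `d ⊗ e ↦ d * S e`. -/
def nuMap : H ⊗[k] H →ₗ[k] H :=
  LinearMap.mul' k H ∘ₗ LinearMap.lTensor H (HopfAlgebra.antipode (R := k))

@[simp] lemma nuMap_tmul (d e : H) :
    nuMap (d ⊗ₜ[k] e) = d * HopfAlgebra.antipode (R := k) e := by
  simp [nuMap]

/-- `c ⊗ (d ⊗ e) ↦ (c * S w) ⊗ (d * S e)`. -/
def PhiMap (w : H) : H ⊗[k] (H ⊗[k] H) →ₗ[k] H ⊗[k] H :=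
  TensorProduct.map (LinearMap.mulRight k (HopfAlgebra.antipode (R := k) w)) nuMap

@[simp] lemma PhiMap_tmul (w c d e : H) :
    PhiMap w (c ⊗ₜ[k] (d ⊗ₜ[k] e))
      = (c * HopfAlgebra.antipode (R := k) w) ⊗ₜ[k] (d * HopfAlgebra.antipode (R := k) e) := by
  simp [PhiMap]

/-- `c ⊗ d ↦ Δc * (S w ⊗ S d)`. -/
def XiMap (w : H) : H ⊗[k] H →ₗ[k] H ⊗[k] H :=
  LinearMap.mul' k (H ⊗[k] H) ∘ₗ TensorProduct.map Coalgebra.comul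
    ((TensorProduct.mk k H H (HopfAlgebra.antipode (R := k) w)) ∘ₗ
      HopfAlgebra.antipode (R := k))

@[simp] lemma XiMap_tmul (w c d : H) :
    XiMap w (c ⊗ₜ[k] d) = Coalgebra.comul c *
      (HopfAlgebra.antipode (R := k) w ⊗ₜ[k] HopfAlgebra.antipode (R := k) d) := by
  simp [XiMap]

lemma XiMap_comul (x w : H) :
    XiMap w (Coalgebra.comul x) = (x * HopfAlgebra.antipode (R := k) w) ⊗ₜ[k] (1 : H) := by
  set rx := Coalgebra.Repr.arbitrary k x with hrx
  set r1x : ∀ i : H × H, Coalgebra.Repr k (rx.left i) (H × H) :=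
    fun i => Coalgebra.Repr.arbitrary k _ with hr1x
  set r2x : ∀ i : H × H, Coalgebra.Repr k (rx.right i) (H × H) :=
    fun i => Coalgebra.Repr.arbitrary k _ with hr2x
  have key := Coalgebra.sum_tmul_tmul_eq rx r1x r2x
  apply_fun (PhiMap w) at key
  rw [map_sum, map_sum] at key
  simp only [map_sum, PhiMap_tmul] at key
  calc XiMap w (Coalgebra.comul x)
      = ∑ i ∈ rx.index, Coalgebra.comul (rx.left i) *
          (HopfAlgebra.antipode (R := k) w ⊗ₜ[k]
            HopfAlgebra.antipode (R := k) (rx.right i)) := by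
        rw [← rx.eq, map_sum]
        exact Finset.sum_congr rfl fun i _ => XiMap_tmul w _ _
    _ = ∑ i ∈ rx.index, ∑ j ∈ (r1x i).index,
          ((r1x i).left j * HopfAlgebra.antipode (R := k) w) ⊗ₜ[k]
            ((r1x i).right j * HopfAlgebra.antipode (R := k) (rx.right i)) := by
        refine Finset.sum_congr rfl fun i _ => ?_
        rw [← (r1x i).eq, Finset.sum_mul]
        exact Finset.sum_congr rfl fun j _ => Algebra.TensorProduct.tmul_mul_tmul _ _ _ _
    _ = ∑ i ∈ rx.index, ∑ j ∈ (r2x i).index,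
          (rx.left i * HopfAlgebra.antipode (R := k) w) ⊗ₜ[k]
            ((r2x i).left j * HopfAlgebra.antipode (R := k) ((r2x i).right j)) := key
    _ = ∑ i ∈ rx.index, (Coalgebra.counit (R := k) (rx.right i) •
          ((rx.left i * HopfAlgebra.antipode (R := k) w) ⊗ₜ[k] (1:H))) := by
        refine Finset.sum_congr rfl fun i _ => ?_
        rw [← TensorProduct.tmul_sum, HopfAlgebra.sum_mul_antipode_eq_smul (r2x i),
          TensorProduct.tmul_smul]
    _ = (x * HopfAlgebra.antipode (R := k) w) ⊗ₜ[k] (1 : H) := by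
        have : ∀ i ∈ rx.index, Coalgebra.counit (R := k) (rx.right i) •
              ((rx.left i * HopfAlgebra.antipode (R := k) w) ⊗ₜ[k] (1:H))
            = ((Coalgebra.counit (R := k) (rx.right i) • rx.left i) *
                HopfAlgebra.antipode (R := k) w) ⊗ₜ[k] (1:H) := by
          intro i _
          rw [smul_mul_assoc, TensorProduct.smul_tmul']
        rw [Finset.sum_congr rfl this, ← TensorProduct.sum_tmul, ← Finset.sum_mul,
          sum_smul_counit x rx]

/-- `x ⊗ (u ⊗ v) ↦ Δx * (S v ⊗ S u)`. -/
def PsiMap : H ⊗[k] (H ⊗[k] H) →ₗ[k] H ⊗[k] H :=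
  LinearMap.mul' k (H ⊗[k] H) ∘ₗ TensorProduct.map Coalgebra.comul
    ((TensorProduct.comm k H H).toLinearMap ∘ₗ
      TensorProduct.map (HopfAlgebra.antipode (R := k)) (HopfAlgebra.antipode (R := k)))

@[simp] lemma PsiMap_tmul (x u v : H) :
    PsiMap (x ⊗ₜ[k] (u ⊗ₜ[k] v)) = Coalgebra.comul x *
      (HopfAlgebra.antipode (R := k) v ⊗ₜ[k] HopfAlgebra.antipode (R := k) u) := by
  simp [PsiMap]

lemma conv_comul_flip :
    conv (Coalgebra.comul (R := k) (A := H)) antipodeFlip = cunit := by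
  ext a
  set r := Coalgebra.Repr.arbitrary k a with hra
  set r1 : ∀ i : H × H, Coalgebra.Repr k (r.left i) (H × H) :=
    fun i => Coalgebra.Repr.arbitrary k _ with hr1
  set r2 : ∀ i : H × H, Coalgebra.Repr k (r.right i) (H × H) :=
    fun i => Coalgebra.Repr.arbitrary k _ with hr2
  have key := Coalgebra.sum_tmul_tmul_eq r r1 r2
  apply_fun PsiMap at key
  rw [map_sum, map_sum] at key
  simp only [map_sum, PsiMap_tmul] at key
  calc conv Coalgebra.comul antipodeFlip a
      = ∑ i ∈ r.index, Coalgebra.comul (r.left i) * antipodeFlip (r.right i) :=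
        conv_apply_repr _ _ a r
    _ = ∑ i ∈ r.index, ∑ j ∈ (r2 i).index, Coalgebra.comul (r.left i) *
          (HopfAlgebra.antipode (R := k) ((r2 i).right j) ⊗ₜ[k]
            HopfAlgebra.antipode (R := k) ((r2 i).left j)) := by
        refine Finset.sum_congr rfl fun i _ => ?_
        rw [antipodeFlip, LinearMap.comp_apply, LinearMap.comp_apply, ← (r2 i).eq,
          map_sum, map_sum, Finset.mul_sum]
        exact Finset.sum_congr rfl fun j _ => by simp
    _ = ∑ i ∈ r.index, ∑ j ∈ (r1 i).index, Coalgebra.comul ((r1 i).left j) *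
          (HopfAlgebra.antipode (R := k) (r.right i) ⊗ₜ[k]
            HopfAlgebra.antipode (R := k) ((r1 i).right j)) := key.symm
    _ = ∑ i ∈ r.index, XiMap (r.right i) (Coalgebra.comul (r.left i)) := by
        refine Finset.sum_congr rfl fun i _ => ?_
        rw [← (r1 i).eq, map_sum]
        exact (Finset.sum_congr rfl fun j _ => (XiMap_tmul _ _ _).symm).symm
    _ = ∑ i ∈ r.index, (r.left i * HopfAlgebra.antipode (R := k) (r.right i)) ⊗ₜ[k] (1:H) := by
        exact Finset.sum_congr rfl fun i _ => XiMap_comul _ _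
    _ = cunit a := by
        rw [← TensorProduct.sum_tmul, HopfAlgebra.sum_mul_antipode_eq_algebraMap_counit r]
        simp [cunit, Algebra.TensorProduct.one_def, Algebra.TensorProduct.algebraMap_apply]

lemma comul_antipode_eq_flip :
    Coalgebra.comul ∘ₗ HopfAlgebra.antipode (R := k) (A := H) = antipodeFlip := by
  calc Coalgebra.comul ∘ₗ HopfAlgebra.antipode (R := k) (A := H)
      = conv (Coalgebra.comul ∘ₗ HopfAlgebra.antipode (R := k) (A := H)) cunit :=
        (conv_cunit_right _).symm
    _ = conv (Coalgebra.comul ∘ₗ HopfAlgebra.antipode (R := k) (A := H))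
          (conv Coalgebra.comul antipodeFlip) := by rw [conv_comul_flip]
    _ = conv (conv (Coalgebra.comul ∘ₗ HopfAlgebra.antipode (R := k) (A := H))
          Coalgebra.comul) antipodeFlip := (conv_assoc _ _ _).symm
    _ = conv cunit antipodeFlip := by rw [conv_comulS]
    _ = antipodeFlip := conv_cunit_left _

/-- Anti-comultiplicativity of the antipode, elementwise. -/
lemma comul_antipode_repr (a : H) {ι' : Type*} (s : Finset ι') (u v : ι' → H)
    (hrep : ∑ i ∈ s, u i ⊗ₜ[k] v i = Coalgebra.comul a) :
    Coalgebra.comul (HopfAlgebra.antipode (R := k) a)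
      = ∑ i ∈ s, HopfAlgebra.antipode (R := k) (v i) ⊗ₜ[k]
          HopfAlgebra.antipode (R := k) (u i) := by
  have h := congrArg (fun f : H →ₗ[k] H ⊗[k] H => f a) comul_antipode_eq_flip
  simp only [LinearMap.comp_apply] at h
  rw [h, antipodeFlip, LinearMap.comp_apply, LinearMap.comp_apply, ← hrep, map_sum, map_sum]
  exact Finset.sum_congr rfl fun i _ => by simp

end ACO


section KeyIdentity

variable (lam : H →ₗ[k] k)

/-- `a ⊗ h ↦ lam (S a * h)`. -/
def g2 : H ⊗[k] H →ₗ[k] k :=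
  lam ∘ₗ LinearMap.mul' k H ∘ₗ LinearMap.rTensor H (HopfAlgebra.antipode (R := k))

@[simp] lemma g2_tmul (a h : H) :
    g2 lam (a ⊗ₜ[k] h) = lam (HopfAlgebra.antipode (R := k) a * h) := by
  simp [g2]

/-- `a ↦ lam (S a * h)`. -/
def gam (h : H) : H →ₗ[k] k :=
  lam ∘ₗ LinearMap.mulRight k h ∘ₗ HopfAlgebra.antipode (R := k)

@[simp] lemma gam_apply (h a : H) :
    gam lam h a = lam (HopfAlgebra.antipode (R := k) a * h) := rfl

/-- `(c ⊗ a) ⊗ h ↦ lam (S a * h) • c`. -/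
def sigmaMap : (H ⊗[k] H) ⊗[k] H →ₗ[k] H :=
  (TensorProduct.rid k H).toLinearMap ∘ₗ LinearMap.lTensor H (g2 lam) ∘ₗ
    (TensorProduct.assoc k H H H).toLinearMap

@[simp] lemma sigmaMap_tmul (c a h : H) :
    sigmaMap lam ((c ⊗ₜ[k] a) ⊗ₜ[k] h) = lam (HopfAlgebra.antipode (R := k) a * h) • c := by
  simp [sigmaMap]

lemma sigmaMap_tmul' (u : H ⊗[k] H) (h : H) :
    sigmaMap lam (u ⊗ₜ[k] h) = ctr (gam lam h) u := by
  induction u using TensorProduct.induction_on with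
  | zero => simp [TensorProduct.zero_tmul]
  | tmul c a => simp
  | add u1 u2 h1 h2 => rw [TensorProduct.add_tmul, map_add, map_add, h1, h2]

/-- `b ⊗ h ↦ ∑ lam(S b₂ * h) • b₁`. -/
def Fmap : H ⊗[k] H →ₗ[k] H :=
  sigmaMap lam ∘ₗ LinearMap.rTensor H Coalgebra.comul

lemma Fmap_tmul (b h : H) :
    Fmap lam (b ⊗ₜ[k] h) = ctr (gam lam h) (Coalgebra.comul b) := by
  rw [Fmap, LinearMap.comp_apply, LinearMap.rTensor_tmul, sigmaMap_tmul']

lemma Fmap_tmul_repr (b h : H) (rb : Coalgebra.Repr k b (H × H)) :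
    Fmap lam (b ⊗ₜ[k] h) = ∑ i ∈ rb.index,
      lam (HopfAlgebra.antipode (R := k) (rb.right i) * h) • rb.left i := by
  rw [Fmap_tmul, ← rb.eq, map_sum]
  exact Finset.sum_congr rfl fun i _ => by simp

/-- `b ⊗ h ↦ ∑ lam(S b * h₁) • h₂`. -/
def Gmap : H ⊗[k] H →ₗ[k] H :=
  (TensorProduct.lid k H).toLinearMap ∘ₗ LinearMap.rTensor H (g2 lam) ∘ₗ
    (TensorProduct.assoc k H H H).symm.toLinearMap ∘ₗ LinearMap.lTensor H Coalgebra.comul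

lemma Gmap_tmul_repr (b h : H) (rh : Coalgebra.Repr k h (H × H)) :
    Gmap lam (b ⊗ₜ[k] h) = ∑ j ∈ rh.index,
      lam (HopfAlgebra.antipode (R := k) b * rh.left j) • rh.right j := by
  rw [Gmap]
  simp only [LinearMap.comp_apply, LinearMap.lTensor_tmul]
  rw [← rh.eq, TensorProduct.tmul_sum, map_sum, map_sum, map_sum]
  exact Finset.sum_congr rfl fun j _ => by
    simp [TensorProduct.assoc_symm_tmul]

variable {lam}

lemma Fmap_eq_Gmap
    (hinv : ∀ a : H, LinearMap.rTensor H (LinearMap.toSpanSingleton k H 1 ∘ₗ lam)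
      (Coalgebra.comul a) = lam a • ((1:H) ⊗ₜ[k] (1:H))) :
    Fmap lam = Gmap lam := by
  apply TensorProduct.ext'
  intro b h
  classical
  -- auxiliary maps depending on `h`
  set Gh : H →ₗ[k] H := Gmap lam ∘ₗ (TensorProduct.mk k H H).flip h with hGh
  set inner : H ⊗[k] H →ₗ[k] H :=
    LinearMap.mul' k H ∘ₗ TensorProduct.map (HopfAlgebra.antipode (R := k)) Gh with hinner
  set LamMap : H ⊗[k] (H ⊗[k] H) →ₗ[k] H :=
    LinearMap.mul' k H ∘ₗ TensorProduct.map LinearMap.id inner with hLam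
  have LamMap_tmul : ∀ c d e : H, LamMap (c ⊗ₜ[k] (d ⊗ₜ[k] e))
      = c * (HopfAlgebra.antipode (R := k) d * Gh e) := by
    intro c d e; simp [hLam, hinner]
  set rh := Coalgebra.Repr.arbitrary k h with hrh
  -- the K1a collapse
  have K1a : ∀ c : H, inner (Coalgebra.comul c)
      = lam (HopfAlgebra.antipode (R := k) c * h) • 1 := by
    intro c
    set rc := Coalgebra.Repr.arbitrary k c with hrc
    have hrepSc : ∑ p ∈ rc.index ×ˢ rh.index,
        (HopfAlgebra.antipode (R := k) (rc.right p.1) * rh.left p.2) ⊗ₜ[k]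
          (HopfAlgebra.antipode (R := k) (rc.left p.1) * rh.right p.2)
        = Coalgebra.comul (HopfAlgebra.antipode (R := k) c * h) := by
      rw [Bialgebra.comul_mul, comul_antipode_repr c rc.index rc.left rc.right rc.eq,
        ← rh.eq, Finset.sum_mul_sum, Finset.sum_product]
      exact Finset.sum_congr rfl fun i _ => Finset.sum_congr rfl fun j _ =>
        (Algebra.TensorProduct.tmul_mul_tmul _ _ _ _).symm
    have hINV := integral_sum_smul hinv (HopfAlgebra.antipode (R := k) c * h)
      (rc.index ×ˢ rh.index) _ _ hrepSc
    have hGhval : ∀ x : H, Gh x = ∑ j ∈ rh.index,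
        lam (HopfAlgebra.antipode (R := k) x * rh.left j) • rh.right j := by
      intro x
      rw [hGh, LinearMap.comp_apply, LinearMap.flip_apply, TensorProduct.mk_apply]
      exact Gmap_tmul_repr lam x h rh
    calc inner (Coalgebra.comul c)
        = ∑ i ∈ rc.index, HopfAlgebra.antipode (R := k) (rc.left i) * Gh (rc.right i) := by
          rw [← rc.eq, map_sum]
          exact Finset.sum_congr rfl fun i _ => by simp [hinner]
      _ = ∑ i ∈ rc.index, ∑ j ∈ rh.index,
            lam (HopfAlgebra.antipode (R := k) (rc.right i) * rh.left j) •
              (HopfAlgebra.antipode (R := k) (rc.left i) * rh.right j) := by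
          refine Finset.sum_congr rfl fun i _ => ?_
          rw [hGhval (rc.right i), Finset.mul_sum]
          exact Finset.sum_congr rfl fun j _ => mul_smul_comm _ _ _
      _ = ∑ p ∈ rc.index ×ˢ rh.index,
            lam (HopfAlgebra.antipode (R := k) (rc.right p.1) * rh.left p.2) •
              (HopfAlgebra.antipode (R := k) (rc.left p.1) * rh.right p.2) := by
          rw [Finset.sum_product]
      _ = lam (HopfAlgebra.antipode (R := k) c * h) • 1 := hINV
  have hGhval : ∀ x : H, Gh x = ∑ j ∈ rh.index,
      lam (HopfAlgebra.antipode (R := k) x * rh.left j) • rh.right j := by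
    intro x
    rw [hGh, LinearMap.comp_apply, LinearMap.flip_apply, TensorProduct.mk_apply]
    exact Gmap_tmul_repr lam x h rh
  -- main computation
  set rb := Coalgebra.Repr.arbitrary k b with hrb
  set rb1 : ∀ i : H × H, Coalgebra.Repr k (rb.left i) (H × H) :=
    fun i => Coalgebra.Repr.arbitrary k _ with hrb1
  set rb2 : ∀ i : H × H, Coalgebra.Repr k (rb.right i) (H × H) :=
    fun i => Coalgebra.Repr.arbitrary k _ with hrb2
  have key := Coalgebra.sum_tmul_tmul_eq rb rb1 rb2
  apply_fun LamMap at key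
  rw [map_sum, map_sum] at key
  simp only [map_sum, LamMap_tmul] at key
  have hSb : HopfAlgebra.antipode (R := k) b = ∑ i ∈ rb.index,
      Coalgebra.counit (R := k) (rb.left i) •
        HopfAlgebra.antipode (R := k) (rb.right i) := by
    conv_lhs => rw [← sum_counit_smul b rb]
    rw [map_sum]
    exact Finset.sum_congr rfl fun i _ => by rw [map_smul]
  have calcG : Gmap lam (b ⊗ₜ[k] h) = Fmap lam (b ⊗ₜ[k] h) := by
    calc Gmap lam (b ⊗ₜ[k] h)
        = ∑ j ∈ rh.index, lam (HopfAlgebra.antipode (R := k) b * rh.left j) •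
            rh.right j := Gmap_tmul_repr lam b h rh
      _ = ∑ j ∈ rh.index, ∑ i ∈ rb.index, Coalgebra.counit (R := k) (rb.left i) •
            (lam (HopfAlgebra.antipode (R := k) (rb.right i) * rh.left j) •
              rh.right j) := by
          refine Finset.sum_congr rfl fun j _ => ?_
          rw [hSb, Finset.sum_mul, map_sum, Finset.sum_smul]
          exact Finset.sum_congr rfl fun i _ => by
            rw [smul_mul_assoc, map_smul, smul_assoc]
      _ = ∑ i ∈ rb.index, Coalgebra.counit (R := k) (rb.left i) • Gh (rb.right i) := by
          rw [Finset.sum_comm]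
          refine Finset.sum_congr rfl fun i _ => ?_
          rw [hGhval (rb.right i), Finset.smul_sum]
      _ = ∑ i ∈ rb.index, ∑ l ∈ (rb1 i).index, (rb1 i).left l *
            (HopfAlgebra.antipode (R := k) ((rb1 i).right l) * Gh (rb.right i)) := by
          refine Finset.sum_congr rfl fun i _ => ?_
          rw [show Coalgebra.counit (R := k) (rb.left i) • Gh (rb.right i)
              = (Coalgebra.counit (R := k) (rb.left i) • (1:H)) * Gh (rb.right i) by
                rw [smul_mul_assoc, one_mul],
            ← HopfAlgebra.sum_mul_antipode_eq_smul (rb1 i), Finset.sum_mul]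
          exact Finset.sum_congr rfl fun l _ => mul_assoc _ _ _
      _ = ∑ i ∈ rb.index, ∑ n ∈ (rb2 i).index, rb.left i *
            (HopfAlgebra.antipode (R := k) ((rb2 i).left n) * Gh ((rb2 i).right n)) := key
      _ = ∑ i ∈ rb.index, rb.left i *
            (lam (HopfAlgebra.antipode (R := k) (rb.right i) * h) • 1) := by
          refine Finset.sum_congr rfl fun i _ => ?_
          rw [← Finset.mul_sum]
          congr 1
          rw [← K1a (rb.right i), ← (rb2 i).eq, map_sum]
          exact (Finset.sum_congr rfl fun n _ => by simp [hinner]).symm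
      _ = ∑ i ∈ rb.index, lam (HopfAlgebra.antipode (R := k) (rb.right i) * h) •
            rb.left i := by
          exact Finset.sum_congr rfl fun i _ => by
            rw [mul_smul_comm, mul_one]
      _ = Fmap lam (b ⊗ₜ[k] h) := (Fmap_tmul_repr lam b h rb).symm
  exact calcG.symm

end KeyIdentity


section Averaging

variable {M : Type} [AddCommGroup M] [Module k M] [Module H M]
  [IsScalarTower k H M] [SMulCommClass H k M]
variable (lam : H →ₗ[k] k)

/-- The partial averaging operator. -/
def qMap (π : M →ₗ[k] M) (ρ : M →ₗ[k] M ⊗[k] H) : M ⊗[k] H →ₗ[k] M :=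
  (TensorProduct.rid k M).toLinearMap ∘ₗ LinearMap.lTensor M (g2 lam) ∘ₗ
    (TensorProduct.assoc k M H H).toLinearMap ∘ₗ LinearMap.rTensor H (ρ ∘ₗ π)

/-- The averaging (colinearization) of the projection `π`. -/
def tildeMap (π : M →ₗ[k] M) (ρ : M →ₗ[k] M ⊗[k] H) : M →ₗ[k] M :=
  qMap lam π ρ ∘ₗ ρ

lemma rid_lTensor_assoc_tmul (φ : H ⊗[k] H →ₗ[k] k) (z : M ⊗[k] H) (h : H) :
    (TensorProduct.rid k M) (LinearMap.lTensor M φ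
      ((TensorProduct.assoc k M H H) (z ⊗ₜ[k] h)))
      = ctr (φ ∘ₗ (TensorProduct.mk k H H).flip h) z := by
  induction z using TensorProduct.induction_on with
  | zero => simp [TensorProduct.zero_tmul]
  | tmul w c => simp
  | add z1 z2 h1 h2 => rw [TensorProduct.add_tmul, map_add, map_add, map_add, h1, h2, map_add]

lemma gam_eq_g2_mk (h : H) :
    gam lam h = g2 lam ∘ₗ (TensorProduct.mk k H H).flip h := by
  ext a; simp

lemma qMap_tmul (π : M →ₗ[k] M) (ρ : M →ₗ[k] M ⊗[k] H) (x : M) (h : H) :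
    qMap lam π ρ (x ⊗ₜ[k] h) = ctr (gam lam h) (ρ (π x)) := by
  rw [qMap]
  simp only [LinearMap.comp_apply, LinearMap.rTensor_tmul, LinearEquiv.coe_coe]
  rw [rid_lTensor_assoc_tmul, gam_eq_g2_mk]

lemma Theta_assoc (ψ : H →ₗ[k] k) (z : M ⊗[k] H) (a : H) :
    LinearMap.lTensor M (ctr ψ) ((TensorProduct.assoc k M H H) (z ⊗ₜ[k] a))
      = ψ a • z := by
  induction z using TensorProduct.induction_on with
  | zero => simp [TensorProduct.zero_tmul]
  | tmul w c => simp [TensorProduct.tmul_smul, TensorProduct.smul_tmul']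
  | add z1 z2 h1 h2 =>
      rw [TensorProduct.add_tmul, map_add, map_add, h1, h2, smul_add]

variable {lam}

lemma tilde_fixes {ρ : M →ₗ[k] M ⊗[k] H} (hcom : IsComod k H ρ) (hlam1 : lam 1 = 1)
    {p : Submodule H M} (hsub : IsSubobject ρ p) {π : M →ₗ[k] M}
    (hπp : ∀ x ∈ p, π x = x) {n : M} (hn : n ∈ p) :
    tildeMap lam π ρ n = n := by
  obtain ⟨ξ, hξ⟩ := hsub n hn
  have hπsub : (ρ ∘ₗ π) ∘ₗ (p.restrictScalars k).subtype
      = ρ ∘ₗ (p.restrictScalars k).subtype := by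
    ext x
    simp only [LinearMap.comp_apply, Submodule.subtype_apply]
    rw [hπp x.1 x.2]
  have hstep : LinearMap.rTensor H (ρ ∘ₗ π) (ρ n) = LinearMap.rTensor H ρ (ρ n) := by
    rw [← hξ, ← LinearMap.comp_apply, ← LinearMap.rTensor_comp, hπsub,
      LinearMap.rTensor_comp, LinearMap.comp_apply]
  have hg2comul : g2 lam ∘ₗ (Coalgebra.comul (R := k) (A := H)) = Coalgebra.counit := by
    ext a
    simp only [LinearMap.comp_apply, g2]
    rw [HopfAlgebra.mul_antipode_rTensor_comul_apply, Algebra.algebraMap_eq_smul_one,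
      map_smul, hlam1, smul_eq_mul, mul_one]
  calc tildeMap lam π ρ n
      = (TensorProduct.rid k M) (LinearMap.lTensor M (g2 lam)
          ((TensorProduct.assoc k M H H) (LinearMap.rTensor H ρ (ρ n)))) := by
        rw [tildeMap, qMap]
        simp only [LinearMap.comp_apply, LinearEquiv.coe_coe, hstep]
    _ = (TensorProduct.rid k M) (LinearMap.lTensor M (g2 lam)
          (LinearMap.lTensor M Coalgebra.comul (ρ n))) := by rw [hcom.2 n]
    _ = (TensorProduct.rid k M) (LinearMap.lTensor M
          (Coalgebra.counit (R := k) (A := H)) (ρ n)) := by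
        rw [← LinearMap.comp_apply, ← LinearMap.lTensor_comp, hg2comul]
    _ = n := hcom.1 n

lemma tilde_mem {ρ : M →ₗ[k] M ⊗[k] H} {p : Submodule H M}
    (hsub : IsSubobject ρ p) {π : M →ₗ[k] M} (hπran : ∀ x, π x ∈ p) (m : M) :
    tildeMap lam π ρ m ∈ p := by
  rw [tildeMap, LinearMap.comp_apply]
  have : ∀ w : M ⊗[k] H, qMap lam π ρ w ∈ p := by
    intro w
    induction w using TensorProduct.induction_on with
    | zero => rw [map_zero]; exact zero_mem _
    | tmul x h =>
        rw [qMap_tmul]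
        obtain ⟨ξ, hξ⟩ := hsub (π x) (hπran x)
        rw [← hξ, ctr_rTensor]
        exact (ctr (gam lam h) ξ).2
    | add w1 w2 h1 h2 => rw [map_add]; exact add_mem h1 h2
  exact this (ρ m)

lemma tilde_smul {ρ : M →ₗ[k] M ⊗[k] H} (hlong : IsLongCompat k H ρ)
    {π : M →ₗ[k] M} (hπcomm : ∀ (h : H) (m : M), π (h • m) = h • π m)
    (h : H) (m : M) :
    tildeMap lam π ρ (h • m) = h • tildeMap lam π ρ m := by
  rw [tildeMap, LinearMap.comp_apply, LinearMap.comp_apply, hlong h m]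
  have : ∀ w : M ⊗[k] H, qMap lam π ρ (LinearMap.rTensor H (smulMap k H h) w)
      = h • qMap lam π ρ w := by
    intro w
    induction w using TensorProduct.induction_on with
    | zero => simp
    | tmul x a =>
        rw [LinearMap.rTensor_tmul, qMap_tmul, qMap_tmul]
        have h1 : ρ (π ((smulMap k H h) x))
            = LinearMap.rTensor H (smulMap k H h) (ρ (π x)) := by
          rw [show (smulMap k H h) x = h • x from rfl, hπcomm h x, ← hlong h (π x)]
        rw [h1, ctr_rTensor]
        rfl
    | add w1 w2 hw1 hw2 => rw [map_add, map_add, hw1, hw2, map_add, smul_add]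
  exact this (ρ m)

lemma qMap_colin_left {ρ : M →ₗ[k] M ⊗[k] H} (hcom : IsComod k H ρ) (π : M →ₗ[k] M) :
    ρ ∘ₗ qMap lam π ρ = LinearMap.lTensor M (Fmap lam) ∘ₗ
      (TensorProduct.assoc k M H H).toLinearMap ∘ₗ LinearMap.rTensor H (ρ ∘ₗ π) := by
  apply TensorProduct.ext'
  intro x h
  obtain ⟨S, hS⟩ := TensorProduct.exists_finset (ρ (π x))
  have coa := hcom.2 (π x)
  simp only [LinearMap.comp_apply, LinearMap.rTensor_tmul, LinearEquiv.coe_coe]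
  rw [qMap_tmul]
  -- apply `lTensor (ctr (gam h))` to coassociativity at `π x`
  have happ := congrArg (LinearMap.lTensor M (ctr (gam lam h))) coa
  -- compute left side of happ
  have hleft : LinearMap.lTensor M (ctr (gam lam h))
      ((TensorProduct.assoc k M H H) ((LinearMap.rTensor H ρ) (ρ (π x))))
      = ρ (ctr (gam lam h) (ρ (π x))) := by
    rw [hS]
    simp only [map_sum]
    refine Finset.sum_congr rfl fun i _ => ?_
    rw [LinearMap.rTensor_tmul, Theta_assoc, ctr_tmul, map_smul]
  -- compute right side of happ
  have hright : LinearMap.lTensor M (ctr (gam lam h))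
      ((LinearMap.lTensor M Coalgebra.comul) (ρ (π x)))
      = LinearMap.lTensor M (Fmap lam)
          ((TensorProduct.assoc k M H H) (ρ (π x) ⊗ₜ[k] h)) := by
    rw [← LinearMap.comp_apply, ← LinearMap.lTensor_comp, hS, TensorProduct.sum_tmul]
    simp only [map_sum]
    refine Finset.sum_congr rfl fun i _ => ?_
    rw [TensorProduct.assoc_tmul, LinearMap.lTensor_tmul, LinearMap.lTensor_tmul,
      LinearMap.comp_apply, Fmap_tmul]
  rw [← hleft, happ, hright]

lemma qMap_colin_right {ρ : M →ₗ[k] M ⊗[k] H} (π : M →ₗ[k] M) :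
    LinearMap.rTensor H (qMap lam π ρ) ∘ₗ (TensorProduct.assoc k M H H).symm.toLinearMap ∘ₗ
        LinearMap.lTensor M (Coalgebra.comul (R := k) (A := H))
      = LinearMap.lTensor M (Gmap lam) ∘ₗ (TensorProduct.assoc k M H H).toLinearMap ∘ₗ
          LinearMap.rTensor H (ρ ∘ₗ π) := by
  apply TensorProduct.ext'
  intro x b
  classical
  obtain ⟨S, hS⟩ := TensorProduct.exists_finset (ρ (π x))
  set rb := Coalgebra.Repr.arbitrary k b with hrb
  simp only [LinearMap.comp_apply, LinearMap.lTensor_tmul, LinearMap.rTensor_tmul,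
    LinearEquiv.coe_coe]
  calc LinearMap.rTensor H (qMap lam π ρ)
        ((TensorProduct.assoc k M H H).symm (x ⊗ₜ[k] Coalgebra.comul b))
      = ∑ j ∈ rb.index, ∑ i ∈ S,
          (lam (HopfAlgebra.antipode (R := k) i.2 * rb.left j) • i.1) ⊗ₜ[k] rb.right j := by
        rw [← rb.eq, TensorProduct.tmul_sum]
        simp only [map_sum]
        refine Finset.sum_congr rfl fun j _ => ?_
        rw [TensorProduct.assoc_symm_tmul, LinearMap.rTensor_tmul, qMap_tmul, hS,
          map_sum, TensorProduct.sum_tmul]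
        refine Finset.sum_congr rfl fun i _ => ?_
        rw [ctr_tmul, gam_apply]
    _ = ∑ i ∈ S, ∑ j ∈ rb.index,
          (lam (HopfAlgebra.antipode (R := k) i.2 * rb.left j) • i.1) ⊗ₜ[k] rb.right j :=
        Finset.sum_comm
    _ = (LinearMap.lTensor M (Gmap lam))
          ((TensorProduct.assoc k M H H) (ρ (π x) ⊗ₜ[k] b)) := by
        conv_rhs => rw [hS, TensorProduct.sum_tmul, map_sum, map_sum]
        refine Finset.sum_congr rfl fun i _ => ?_
        rw [TensorProduct.assoc_tmul, LinearMap.lTensor_tmul, Gmap_tmul_repr lam i.2 b rb,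
          TensorProduct.tmul_sum]
        exact Finset.sum_congr rfl fun j _ => TensorProduct.smul_tmul _ _ _

lemma tilde_colinear {ρ : M →ₗ[k] M ⊗[k] H} (hcom : IsComod k H ρ)
    (hinv : ∀ a : H, LinearMap.rTensor H (LinearMap.toSpanSingleton k H 1 ∘ₗ lam)
      (Coalgebra.comul a) = lam a • ((1:H) ⊗ₜ[k] (1:H)))
    (π : M →ₗ[k] M) :
    ρ ∘ₗ tildeMap lam π ρ = LinearMap.rTensor H (tildeMap lam π ρ) ∘ₗ ρ := by
  apply LinearMap.ext
  intro m
  have hL := LinearMap.congr_fun (qMap_colin_left (lam := lam) hcom π) (ρ m)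
  simp only [LinearMap.comp_apply, LinearEquiv.coe_coe] at hL
  have hR := LinearMap.congr_fun (qMap_colin_right (lam := lam) (ρ := ρ) π) (ρ m)
  simp only [LinearMap.comp_apply, LinearEquiv.coe_coe] at hR
  have hcoa : LinearMap.rTensor H ρ (ρ m)
      = (TensorProduct.assoc k M H H).symm (LinearMap.lTensor M Coalgebra.comul (ρ m)) := by
    rw [← hcom.2 m, LinearEquiv.symm_apply_apply]
  rw [LinearMap.comp_apply, LinearMap.comp_apply, tildeMap, LinearMap.comp_apply,
    LinearMap.rTensor_comp, LinearMap.comp_apply, hcoa, hL, hR, Fmap_eq_Gmap hinv]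

end Averaging



section Subobject

variable {M : Type} [AddCommGroup M] [Module k M] [Module H M]
  [IsScalarTower k H M] [SMulCommClass H k M]
variable {ρ : M →ₗ[k] M ⊗[k] H}

lemma IsSubobject.sSup' {C : Set (Submodule H M)} (hC : ∀ p ∈ C, IsSubobject ρ p) :
    IsSubobject ρ (sSup C) := by
  intro x hx
  rw [sSup_eq_iSup'] at hx
  refine Submodule.iSup_induction (fun p : C => (p : Submodule H M))
    (motive := fun y => ρ y ∈ LinearMap.range
      (LinearMap.rTensor H ((sSup C : Submodule H M).restrictScalars k).subtype)) hx ?_ ?_ ?_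
  · intro p y hy
    refine range_rTensor_mono (fun z hz => ?_) (hC p p.2 y hy)
    exact (le_sSup p.2 : (p : Submodule H M) ≤ sSup C) hz
  · show ρ 0 ∈ _
    rw [map_zero]; exact zero_mem _
  · intro a b ha hb; rw [map_add]; exact add_mem ha hb

lemma subobject_compl (hss : IsSemisimpleRing H)
    (hcom : IsComod k H ρ) (hlong : IsLongCompat k H ρ)
    {lam : H →ₗ[k] k} (hlam1 : lam 1 = 1)
    (hinv : ∀ a : H, LinearMap.rTensor H (LinearMap.toSpanSingleton k H 1 ∘ₗ lam)
      (Coalgebra.comul a) = lam a • ((1:H) ⊗ₜ[k] (1:H)))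
    {p : Submodule H M} (hp : IsSubobject ρ p) :
    ∃ q : Submodule H M, IsSubobject ρ q ∧ IsCompl p q := by
  haveI := hss
  obtain ⟨cp, hcp⟩ := exists_isCompl p
  set π0 : M →ₗ[H] M := p.subtype ∘ₗ p.projectionOnto cp hcp with hπ0
  set π : M →ₗ[k] M := π0.restrictScalars k with hπ
  have hπcomm : ∀ (h : H) (m : M), π (h • m) = h • π m := fun h m => π0.map_smul h m
  have hπp : ∀ x ∈ p, π x = x := by
    intro x hx
    show (π0 x : M) = x
    rw [hπ0]
    simp only [LinearMap.comp_apply, Submodule.subtype_apply]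
    rw [show x = ((⟨x, hx⟩ : p) : M) from rfl,
      Submodule.projectionOnto_apply_left hcp ⟨x, hx⟩]
  have hπran : ∀ x, π x ∈ p := fun x => (p.projectionOnto cp hcp x).2
  set t : M →ₗ[k] M := tildeMap lam π ρ with ht
  have ht_fix : ∀ n ∈ p, t n = n := fun n hn => tilde_fixes hcom hlam1 hp hπp hn
  have ht_mem : ∀ m, t m ∈ p := fun m => tilde_mem hp hπran m
  have ht_smul : ∀ (h : H) (m : M), t (h • m) = h • t m :=
    fun h m => tilde_smul hlong hπcomm h m
  have ht_colin := tilde_colinear (lam := lam) hcom hinv π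
  set t' : M →ₗ[H] M :=
    { toFun := t
      map_add' := t.map_add
      map_smul' := ht_smul } with ht'
  refine ⟨LinearMap.ker t', ?_, ?_, ?_⟩
  · intro x hx
    have hx0 : t x = 0 := hx
    have bH := Module.Basis.ofVectorSpace k H
    rw [mem_range_rTensor_iff bH]
    intro i
    show ctr (bH.coord i) (ρ x) ∈ LinearMap.ker t'
    have : t (ctr (bH.coord i) (ρ x)) = 0 := by
      rw [show t (ctr (bH.coord i) (ρ x)) = ctr (bH.coord i)
            (LinearMap.rTensor H t (ρ x)) from (ctr_rTensor _ _ _).symm,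
        show LinearMap.rTensor H t (ρ x) = ρ (t x) from
          (LinearMap.congr_fun ht_colin x).symm,
        hx0, map_zero, map_zero]
    exact this
  · rw [Submodule.disjoint_def]
    intro x hxp hxq
    have h1 : t x = x := ht_fix x hxp
    have h2 : t x = 0 := hxq
    rw [h2] at h1; exact h1.symm
  · rw [codisjoint_iff, Submodule.eq_top_iff']
    intro x
    refine Submodule.mem_sup.2 ⟨t x, ht_mem x, x - t x, ?_, add_sub_cancel _ _⟩
    show t (x - t x) = 0
    rw [map_sub, ht_fix (t x) (ht_mem x), sub_self]

lemma exists_simple_fg (hss : IsSemisimpleRing H) (hnoeth : IsNoetherianRing H)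
    (hcom : IsComod k H ρ) (hlong : IsLongCompat k H ρ)
    {p : Submodule H M} (hp : IsSubobject ρ p) (hne : p ≠ ⊥) :
    ∃ sm : Submodule H M, sm ≤ p ∧ IsSimpleSubobject ρ sm ∧ sm.FG := by
  classical
  haveI := hss
  haveI := hnoeth
  obtain ⟨m, hm_mem, hm0⟩ := (Submodule.ne_bot_iff p).1 hne
  have bH := Module.Basis.ofVectorSpace k H
  obtain ⟨s, hs0, hsrep⟩ := rep_exists bH (ρ m)
  set cc : _ → M := fun i => ctr (bH.coord i) (ρ m) with hcc
  have hc_p : ∀ i, cc i ∈ p :=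
    (mem_range_rTensor_iff bH (p.restrictScalars k) _).1 (hp m hm_mem)
  set X : Submodule H M := Submodule.span H (↑(s.image cc)) with hX
  have hcX : ∀ i ∈ s, cc i ∈ X := fun i hi =>
    Submodule.subset_span (Finset.mem_coe.2 (Finset.mem_image_of_mem cc hi))
  have hXfg : X.FG := ⟨s.image cc, rfl⟩
  have hXp : X ≤ p := Submodule.span_le.2 (by
    intro y hy
    obtain ⟨i, -, rfl⟩ := Finset.mem_image.1 (Finset.mem_coe.1 hy)
    exact hc_p i)
  have hmX : m ∈ X := by
    have h1 := hcom.1 m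
    rw [hsrep] at h1
    rw [← h1]
    rw [map_sum, map_sum]
    refine Submodule.sum_mem X fun i hi => ?_
    rw [LinearMap.lTensor_tmul, TensorProduct.rid_tmul]
    rw [← IsScalarTower.algebraMap_smul H (Coalgebra.counit (R := k) (bH i)) (cc i)]
    exact Submodule.smul_mem X _ (hcX i hi)
  have hXne : X ≠ ⊥ := by
    intro hbot
    rw [hbot, Submodule.mem_bot] at hmX
    exact hm0 hmX
  have hρc : ∀ i0 ∈ s, ρ (cc i0) ∈ LinearMap.range
      (LinearMap.rTensor H (X.restrictScalars k).subtype) := by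
    intro i0 hi0
    set ψ := bH.coord i0 with hψ
    have happ := congrArg (LinearMap.lTensor M (ctr ψ)) (hcom.2 m)
    have hLHS : LinearMap.lTensor M (ctr ψ)
        ((TensorProduct.assoc k M H H) (LinearMap.rTensor H ρ (ρ m))) = ρ (cc i0) := by
      rw [hsrep]
      simp only [map_sum]
      rw [Finset.sum_congr rfl (fun i _ => by
        rw [LinearMap.rTensor_tmul, Theta_assoc])]
      rw [Finset.sum_eq_single i0 (fun i _ hne' => by
          rw [hψ, Module.Basis.coord_apply, Module.Basis.repr_self, Finsupp.single_apply,
            if_neg hne', zero_smul]) (fun habs => absurd hi0 habs)]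
      rw [hψ, Module.Basis.coord_apply, Module.Basis.repr_self, Finsupp.single_apply, if_pos rfl,
        one_smul]
    have hRHS : LinearMap.lTensor M (ctr ψ)
        ((LinearMap.lTensor M Coalgebra.comul) (ρ m))
        = ∑ i ∈ s, cc i ⊗ₜ[k] (ctr ψ (Coalgebra.comul (bH i))) := by
      rw [hsrep]
      simp only [map_sum]
      exact Finset.sum_congr rfl fun i _ => by
        rw [LinearMap.lTensor_tmul, LinearMap.lTensor_tmul]
    rw [← hLHS, happ, hRHS]
    refine ⟨∑ i ∈ s.attach, (⟨cc i.1, hcX i.1 i.2⟩ : X.restrictScalars k) ⊗ₜ[k]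
      (ctr ψ (Coalgebra.comul (bH i.1))), ?_⟩
    rw [map_sum, ← Finset.sum_attach s
      (fun i => cc i ⊗ₜ[k] (ctr ψ (Coalgebra.comul (bH i))))]
    exact Finset.sum_congr rfl fun i _ => by rw [LinearMap.rTensor_tmul]; rfl
  have hXsub : IsSubobject ρ X := by
    intro x hx
    induction hx using Submodule.span_induction with
    | mem y hy =>
        obtain ⟨i, hi, rfl⟩ := Finset.mem_image.1 (Finset.mem_coe.1 hy)
        exact hρc i hi
    | zero => rw [map_zero]; exact zero_mem _
    | add a b ha hb iha ihb => rw [map_add]; exact add_mem iha ihb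
    | smul a y hy ihy =>
        rw [hlong a y]
        exact range_rTensor_map (smulMap k H a) (fun z hz => X.smul_mem a hz) ihy
  -- now find a minimal subobject inside X
  haveI : Module.Finite H X := Module.Finite.iff_fg.2 hXfg
  haveI : IsArtinian H X := inferInstance
  set T : Set (Submodule H ↥X) := {q' | IsSubobject ρ (Submodule.map X.subtype q') ∧
    Submodule.map X.subtype q' ≠ ⊥} with hT
  have hTne : (⊤ : Submodule H ↥X) ∈ T := by
    constructor
    · rw [Submodule.map_subtype_top]; exact hXsub
    · rw [Submodule.map_subtype_top]; exact hXne
  obtain ⟨q', hq'T, hq'min⟩ := wellFounded_lt.has_min T ⟨⊤, hTne⟩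
  refine ⟨Submodule.map X.subtype q', le_trans (Submodule.map_subtype_le X q') hXp,
    ⟨hq'T.1, hq'T.2, ?_⟩, ?_⟩
  · intro r hr hrle
    by_cases hrbot : r = ⊥
    · exact Or.inl hrbot
    · right
      have hrX : r ≤ X := le_trans hrle (Submodule.map_subtype_le X q')
      set r' := Submodule.comap X.subtype r with hr'
      have hmapr : Submodule.map X.subtype r' = r := by
        rw [hr', Submodule.map_comap_subtype, inf_eq_right.2 hrX]
      have hr'T : r' ∈ T := by
        constructor
        · rw [hmapr]; exact hr
        · rw [hmapr]; exact hrbot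
      have hr'le : r' ≤ q' := by
        rw [hr']
        intro z hz
        have : (X.subtype z) ∈ Submodule.map X.subtype q' := hrle hz
        obtain ⟨w, hw, hwz⟩ := this
        have : w = z := Subtype.ext hwz
        rw [← this]; exact hw
      have hnlt : ¬ r' < q' := hq'min r' hr'T
      have hr'eq : r' = q' := hr'le.lt_or_eq.resolve_left hnlt
      rw [← hmapr, hr'eq]
  · haveI : IsNoetherian H ↥X := isNoetherian_of_fg_of_noetherian X hXfg
    exact Submodule.FG.map _ (IsNoetherian.noetherian q')

end Subobject

end Proof1

/-- Corollary 3.9. Let `k` be a field and `H` a (not necessarily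
commutative) Hopf algebra over `k` with bijective antipode which is left noetherian,
semisimple and cosemisimple. Then every left-right Long dimodule over `H` is a
direct sum, in the category of Long dimodules, of a family of simple subobjects
which are finitely generated as `H`-modules; hence the category of Long dimodules
over `H` is semisimple. -/
theorem semisimplicity_of_Long_dimodules
    (k H : Type) [Field k] [Ring H] [HopfAlgebra k H]
    (Sinv : H →ₗ[k] H)
    (hS1 : ∀ h : H, Sinv (HopfAlgebra.antipode (R := k) (A := H) h) = h)
    (hS2 : ∀ h : H, HopfAlgebra.antipode (R := k) (A := H) (Sinv h) = h)
    (hnoeth : IsNoetherianRing H)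
    (hss : IsSemisimpleRing H)
    (hcoss : Cosemisimple k H) :
    ∀ A : LongCat k H, IsSemisimpleObj A.ρ := by
  intro A
  by_cases hH : Nontrivial H
  · haveI := hH
    obtain ⟨lam, hlam1, hinv⟩ := exists_integral hcoss
    have hcom := A.comod
    have hlong := A.compat
    classical
    set 𝒜 : Set (Set (Submodule H A.M)) :=
      {C | (∀ p ∈ C, IsSimpleSubobject A.ρ p ∧ p.FG) ∧ sSupIndep C} with h𝒜
    have hempty : (∅ : Set (Submodule H A.M)) ∈ 𝒜 := ⟨by simp, sSupIndep_empty⟩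
    obtain ⟨C, -, hCmax⟩ := zorn_subset_nonempty 𝒜 (fun c hc hchain hcne => by
      refine ⟨⋃₀ c, ⟨?_, ?_⟩, fun sC hsC => Set.subset_sUnion_of_mem hsC⟩
      · rintro p ⟨sC, hsC, hp⟩
        exact (hc hsC).1 p hp
      · exact iSupIndep_sUnion_of_directed hchain.directedOn (fun a ha => (hc ha).2)) ∅ hempty
    have hC := hCmax.prop
    have hNsub : IsSubobject A.ρ (sSup C) := IsSubobject.sSup' fun p hp => (hC.1 p hp).1.1
    have hNtop : sSup C = ⊤ := by
      by_contra hne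
      obtain ⟨q, hqsub, hqcompl⟩ := subobject_compl hss hcom hlong hlam1 hinv hNsub
      have hqne : q ≠ ⊥ := by
        intro hbot
        rw [hbot] at hqcompl
        exact hne (by simpa using hqcompl.codisjoint.eq_top)
      obtain ⟨s0, hs0q, hs0simple, hs0fg⟩ :=
        exists_simple_fg hss hnoeth hcom hlong hqsub hqne
      have hs0N : Disjoint (sSup C) s0 := hqcompl.disjoint.mono_right hs0q
      have hs0notin : s0 ∉ C := by
        intro hmem
        have h1 : s0 ≤ sSup C := le_sSup hmem
        have hbot : s0 = ⊥ := le_bot_iff.1 (le_trans (le_inf h1 le_rfl) hs0N.le_bot)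
        exact hs0simple.2.1 hbot
      have hCins : insert s0 C ∈ 𝒜 := by
        constructor
        · rintro p hp
          rcases Set.mem_insert_iff.1 hp with rfl | hp
          · exact ⟨hs0simple, hs0fg⟩
          · exact hC.1 p hp
        · intro a ha
          rcases Set.mem_insert_iff.1 ha with rfl | haC
          · refine Disjoint.mono_right ?_ hs0N.symm
            refine sSup_le_sSup ?_
            rintro b ⟨hb1, hb2⟩
            rcases Set.mem_insert_iff.1 hb1 with rfl | hmem
            · exact absurd rfl hb2
            · exact hmem
          · have d1 : Disjoint a (sSup (C \ {a})) := hC.2 haC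
            have d2 : Disjoint (a ⊔ sSup (C \ {a})) s0 := by
              refine hs0N.mono_left ?_
              exact sup_le (le_sSup haC) (sSup_le_sSup Set.diff_subset)
            have d3 : Disjoint a (sSup (C \ {a}) ⊔ s0) :=
              d1.disjoint_sup_right_of_disjoint_sup_left d2
            refine d3.mono_right ?_
            have hsubset : insert s0 C \ {a} ⊆ insert s0 (C \ {a}) := by
              rintro b ⟨hb1, hb2⟩
              rcases Set.mem_insert_iff.1 hb1 with rfl | hmem
              · exact Set.mem_insert _ _
              · exact Set.mem_insert_of_mem _ ⟨hmem, hb2⟩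
            calc sSup (insert s0 C \ {a}) ≤ sSup (insert s0 (C \ {a})) :=
                  sSup_le_sSup hsubset
              _ = s0 ⊔ sSup (C \ {a}) := sSup_insert
              _ = sSup (C \ {a}) ⊔ s0 := sup_comm _ _
      have hsub : insert s0 C ⊆ C := hCmax.2 hCins (Set.subset_insert s0 C)
      exact hs0notin (hsub (Set.mem_insert s0 C))
    refine ⟨↥C, fun c => (c : Submodule H A.M), fun c => hC.1 c c.2, ?_, ?_⟩
    · exact (sSupIndep_iff C).1 hC.2
    · rw [← sSup_eq_iSup']
      exact hNtop
  · haveI : Subsingleton H := not_nontrivial_iff_subsingleton.1 hH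
    have hM0 : ∀ m : A.M, m = 0 := by
      intro m
      calc m = (1 : H) • m := (one_smul H m).symm
        _ = (0 : H) • m := by rw [Subsingleton.elim (1 : H) (0 : H)]
        _ = 0 := zero_smul H m
    refine ⟨Empty, fun i => i.elim, fun i => i.elim, fun i => i.elim, ?_⟩
    rw [iSup_of_empty, Submodule.eq_top_iff']
    intro x
    rw [hM0 x]
    exact zero_mem _
end YDPaper
end
end

section
/- Let H be a commutative Hopf algebra with bijective antipode over a commutative ring k (faithfully flat over k), and let M, N, P be left-right Yetter-Drinfeld modules over H with N finitely generated and projective as a left H-module. Then there is a k-linear isomorphism Hom_H^H(M, Hom_H(N, P)) ≅ Hom_H^H(M ⊗_H N, P), where Hom_H^H denotes the space of H-linear H-colinear maps. -/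
/-!
Common definitions for formalizing "Semisimplicity of the categories of
Yetter-Drinfeld modules and Long dimodules" (Caenepeel, Guédénon).
-/

open TensorProduct

noncomputable section
namespace YDPaper

/-!
Currying identifies `H`-linear maps `f : M → Hom_H(N, P)` with `H`-linear maps
`g : M ⊗_H N → P`, `g (m ⊗ n) = f m n`; the point is that `f` is colinear iff `g` is.
Fix `m` and put `χ = ρ_P ∘ f m` and `ψ(n) = f m₀ n ⊗ m₁`. By the formula for the coaction
of `Hom_H(N, P)`, `f` is colinear at `m` iff `χ(n₀) (1 ⊗ S n₁) = ψ(n)` for all `n`; here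
evaluation at the points of `N` separates `Hom_H(N, P) ⊗ H` because `N` is a direct summand
of some `Hʳ`. By the formula for the coaction of `M ⊗_H N`, `g` is colinear on `m ⊗ N` iff
`χ(n) = ψ(n₀) (1 ⊗ n₁)`. The antipode identities `n₀₀ ⊗ S(n₀₁) n₁ = n ⊗ 1 = n₀₀ ⊗ n₀₁ S(n₁)`
make these two conditions equivalent.
-/

section Tensor

variable {R A M N W : Type} [CommSemiring R] [AddCommMonoid M] [Module R M] [AddCommMonoid N]

theorem exists_sum_range_tmul_eq [Module R N] (x : M ⊗[R] N) :
    ∃ (t : Finset ℕ) (a : ℕ → M) (b : ℕ → N), ∑ j ∈ t, a j ⊗ₜ[R] b j = x := by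
  obtain ⟨S, rfl⟩ := TensorProduct.exists_finset x
  refine ⟨Finset.range S.toList.length, fun j => (S.toList.getD j 0).1,
    fun j => (S.toList.getD j 0).2, ?_⟩
  rw [← Fin.sum_univ_eq_sum_range (fun j => (S.toList.getD j 0).1 ⊗ₜ[R] (S.toList.getD j 0).2),
    ← Finset.sum_map_toList S, ← Fin.sum_univ_fun_getElem S.toList]
  exact Finset.sum_congr rfl fun i _ => by rw [List.getD_eq_getElem _ _ i.2]

theorem linearMap_ext_tmul [CommSemiring A] [Module A M] [SMulCommClass A R M] [Module A N]
    [AddCommMonoid W] [Module R W] {g g' : M ⊗[A] N →ₗ[R] W}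
    (h : ∀ m n, g (m ⊗ₜ n) = g' (m ⊗ₜ n)) : g = g' := by
  ext x
  induction x using TensorProduct.induction_on with
  | zero => simp
  | tmul m n => exact h m n
  | add x y hx hy => rw [map_add, map_add, hx, hy]

end Tensor

section LiftRightMul

variable {k H V W P : Type} [CommSemiring k] [Semiring H] [Algebra k H]
  [AddCommMonoid V] [Module k V] [AddCommMonoid W] [Module k W] [AddCommMonoid P] [Module k P]

/-- The right `H`-linear extension `v ⊗ h ↦ χ(v) (1 ⊗ h)` of `χ`. -/
def liftRightMul (χ : V →ₗ[k] P ⊗[k] H) : V ⊗[k] H →ₗ[k] P ⊗[k] H :=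
  LinearMap.lTensor P (LinearMap.mul' k H) ∘ₗ (TensorProduct.assoc k P H H).toLinearMap ∘ₗ
    LinearMap.rTensor H χ

theorem liftRightMul_tmul (χ : V →ₗ[k] P ⊗[k] H) (v : V) (h : H) :
    liftRightMul χ (v ⊗ₜ h) = LinearMap.lTensor P (LinearMap.mulRight k h) (χ v) := by
  simp only [liftRightMul, LinearMap.comp_apply, LinearEquiv.coe_coe, LinearMap.rTensor_tmul]
  induction χ v using TensorProduct.induction_on with
  | zero => simp
  | tmul p a => simp
  | add x y hx hy => simp [TensorProduct.add_tmul, hx, hy]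

theorem liftRightMul_tmul_one (χ : V →ₗ[k] P ⊗[k] H) (v : V) :
    liftRightMul χ (v ⊗ₜ 1) = χ v := by
  simp [liftRightMul_tmul, LinearMap.mulRight_one]

theorem liftRightMul_lTensor_mulRight (χ : V →ₗ[k] P ⊗[k] H) (h : H) (x : V ⊗[k] H) :
    liftRightMul χ (LinearMap.lTensor V (LinearMap.mulRight k h) x) =
      LinearMap.lTensor P (LinearMap.mulRight k h) (liftRightMul χ x) := by
  induction x using TensorProduct.induction_on with
  | zero => simp
  | tmul v a =>
    simp only [LinearMap.lTensor_tmul, LinearMap.mulRight_apply, liftRightMul_tmul]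
    rw [LinearMap.mulRight_mul, LinearMap.lTensor_comp, LinearMap.comp_apply]
  | add x y hx hy => simp [hx, hy]

theorem liftRightMul_comp (χ : W →ₗ[k] P ⊗[k] H) (φ : V →ₗ[k] W ⊗[k] H) :
    liftRightMul (liftRightMul χ ∘ₗ φ) = liftRightMul χ ∘ₗ liftRightMul φ := by
  ext v h
  simp [liftRightMul_tmul, liftRightMul_lTensor_mulRight]

theorem liftRightMul_lTensor (χ : V →ₗ[k] P ⊗[k] H) (g : H →ₗ[k] H) (x : V ⊗[k] H) :
    liftRightMul χ (LinearMap.lTensor V g x) =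
      LinearMap.lTensor P (LinearMap.mul' k H ∘ₗ LinearMap.lTensor H g)
        (TensorProduct.assoc k P H H (LinearMap.rTensor H χ x)) := by
  induction x using TensorProduct.induction_on with
  | zero => simp
  | tmul v h =>
    rw [LinearMap.lTensor_tmul, liftRightMul_tmul, LinearMap.rTensor_tmul]
    induction χ v using TensorProduct.induction_on with
    | zero => simp
    | tmul p a => simp
    | add x y hx hy => simp [TensorProduct.add_tmul, hx, hy]
  | add x y hx hy => simp [hx, hy]

theorem liftRightMul_lTensor_comp (χ : V →ₗ[k] P ⊗[k] H) (g : H →ₗ[k] H) (x : V ⊗[k] H) :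
    liftRightMul (LinearMap.lTensor P g ∘ₗ χ) x =
      LinearMap.lTensor P (LinearMap.mul' k H ∘ₗ LinearMap.rTensor H g)
        (TensorProduct.assoc k P H H (LinearMap.rTensor H χ x)) := by
  induction x using TensorProduct.induction_on with
  | zero => simp
  | tmul v h =>
    rw [liftRightMul_tmul, LinearMap.rTensor_tmul, LinearMap.comp_apply]
    induction χ v using TensorProduct.induction_on with
    | zero => simp
    | tmul p a => simp
    | add x y hx hy => simp [TensorProduct.add_tmul, hx, hy]
  | add x y hx hy => simp [hx, hy]

end LiftRightMul

namespace IsComod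

variable {k H V P : Type} [CommRing k] [Ring H] [HopfAlgebra k H]
  [AddCommGroup V] [Module k V] [AddCommGroup P] [Module k P]
  {ρ : V →ₗ[k] V ⊗[k] H}

theorem lTensor_counit (hρ : IsComod k H ρ) (v : V) :
    LinearMap.lTensor V (Coalgebra.counit (R := k) (A := H)) (ρ v) = v ⊗ₜ 1 := by
  apply (TensorProduct.rid k V).injective
  rw [hρ.1 v, TensorProduct.rid_tmul, one_smul]

theorem lTensor_assoc_rTensor (hρ : IsComod k H ρ) {φ : H ⊗[k] H →ₗ[k] H}
    (hφ : φ ∘ₗ Coalgebra.comul = Algebra.linearMap k H ∘ₗ Coalgebra.counit) (v : V) :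
    LinearMap.lTensor V φ (TensorProduct.assoc k V H H (LinearMap.rTensor H ρ (ρ v))) =
      v ⊗ₜ 1 := by
  rw [hρ.2 v, ← LinearMap.comp_apply, ← LinearMap.lTensor_comp, hφ, LinearMap.lTensor_comp,
    LinearMap.comp_apply, hρ.lTensor_counit, LinearMap.lTensor_tmul, Algebra.linearMap_apply,
    map_one]

theorem liftRightMul_lTensor_antipode (hρ : IsComod k H ρ) (v : V) :
    liftRightMul ρ (LinearMap.lTensor V (HopfAlgebra.antipode k) (ρ v)) = v ⊗ₜ 1 := by
  rw [liftRightMul_lTensor]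
  exact hρ.lTensor_assoc_rTensor
    ((LinearMap.comp_assoc _ _ _).trans HopfAlgebra.mul_antipode_lTensor_comul) v

theorem liftRightMul_lTensor_antipode_comp (hρ : IsComod k H ρ) (v : V) :
    liftRightMul (LinearMap.lTensor V (HopfAlgebra.antipode k) ∘ₗ ρ) (ρ v) = v ⊗ₜ 1 := by
  rw [liftRightMul_lTensor_comp]
  exact hρ.lTensor_assoc_rTensor
    ((LinearMap.comp_assoc _ _ _).trans HopfAlgebra.mul_antipode_rTensor_comul) v

theorem liftRightMul_comp_antipode_eq_iff (hρ : IsComod k H ρ) (χ ψ : V →ₗ[k] P ⊗[k] H) :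
    liftRightMul χ ∘ₗ LinearMap.lTensor V (HopfAlgebra.antipode k) ∘ₗ ρ = ψ ↔
      χ = liftRightMul ψ ∘ₗ ρ := by
  constructor
  · rintro rfl
    ext v
    rw [LinearMap.comp_apply, liftRightMul_comp, LinearMap.comp_apply,
      hρ.liftRightMul_lTensor_antipode_comp, liftRightMul_tmul_one]
  · rintro rfl
    ext v
    rw [LinearMap.comp_apply, LinearMap.comp_apply, liftRightMul_comp, LinearMap.comp_apply,
      hρ.liftRightMul_lTensor_antipode, liftRightMul_tmul_one]

end IsComod

section EvalTensor

variable {k H N P W : Type} [CommRing k] [Ring H] [Algebra k H]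
  [AddCommGroup N] [Module k N] [Module H N] [IsScalarTower k H N]
  [AddCommGroup P] [Module k P] [Module H P] [IsScalarTower k H P] [SMulCommClass H k P]
  [AddCommGroup W] [Module k W]

def evalTensor : (N →ₗ[H] P) ⊗[k] W →ₗ[k] N →ₗ[k] P ⊗[k] W :=
  LinearMap.mk₂ k (fun x n => LinearMap.rTensor W (evalAtH n) x)
    (fun x y n => map_add _ x y) (fun c x n => map_smul _ c x)
    (fun x n n' => by
      induction x using TensorProduct.induction_on <;>
        simp_all [evalAtH, TensorProduct.add_tmul, add_add_add_comm])
    (fun c x n => by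
      induction x using TensorProduct.induction_on <;>
        simp_all [evalAtH, TensorProduct.smul_tmul'])

theorem evalTensor_apply (x : (N →ₗ[H] P) ⊗[k] W) (n : N) :
    evalTensor x n = LinearMap.rTensor W (evalAtH n) x := rfl

theorem evalTensor_injective [Module.Finite H N] [Module.Projective H N] :
    Function.Injective (evalTensor : (N →ₗ[H] P) ⊗[k] W →ₗ[k] N →ₗ[k] P ⊗[k] W) := by
  obtain ⟨r, π, σ, -, -, hπσ⟩ := Module.Finite.exists_comp_eq_id_of_projective H N
  let e : Fin r → Fin r → H := fun i j => if i = j then 1 else 0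
  let μ : Fin r → P →ₗ[k] (N →ₗ[H] P) := fun i =>
    { toFun p := (LinearMap.proj i ∘ₗ σ).smulRight p
      map_add' p p' := by ext; simp
      map_smul' c p := by ext n; exact smul_comm _ c p }
  -- `f n = f (π (σ n)) = ∑ᵢ σ(n)ᵢ • f (π eᵢ)`
  have hid : ∑ i, μ i ∘ₗ evalAtH (π (e i)) = LinearMap.id := by
    ext f n
    have := LinearMap.pi_apply_eq_sum_univ (f ∘ₗ π) (σ n)
    rw [LinearMap.comp_apply, ← LinearMap.comp_apply π σ, hπσ, LinearMap.id_apply] at this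
    rw [LinearMap.id_apply, this, LinearMap.sum_apply, LinearMap.sum_apply]
    rfl
  have hsplit : ∀ x : (N →ₗ[H] P) ⊗[k] W,
      x = ∑ i, LinearMap.rTensor W (μ i) (evalTensor x (π (e i))) := by
    intro x
    conv_lhs => rw [← LinearMap.rTensor_id_apply W _ x, ← hid]
    rw [← LinearMap.coe_rTensorHom, map_sum, LinearMap.sum_apply]
    simp [evalTensor_apply, LinearMap.rTensor_comp]
  intro x y hxy
  rw [hsplit x, hsplit y, hxy]

end EvalTensor

section Currying

variable {k H M N P : Type} [CommRing k] [CommRing H] [Algebra k H]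
  [AddCommGroup M] [Module k M] [Module H M] [IsScalarTower k H M] [SMulCommClass H k M]
  [AddCommGroup N] [Module H N]
  [AddCommGroup P] [Module k P] [Module H P] [IsScalarTower k H P] [SMulCommClass H k P]

def uncurryH (f : M →ₗ[k] N →ₗ[H] P) (hf : ∀ (h : H) m, f (h • m) = h • f m) :
    M ⊗[H] N →ₗ[k] P :=
  (TensorProduct.lift { toFun := f, map_add' := f.map_add, map_smul' := hf }).restrictScalars k

def curryH (g : M ⊗[H] N →ₗ[k] P) (hg : ∀ (h : H) x, g (h • x) = h • g x) :
    M →ₗ[k] N →ₗ[H] P :=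
  (TensorProduct.curry { toFun := g, map_add' := g.map_add, map_smul' := hg }).restrictScalars k

end Currying

section YetterDrinfeld

variable {k H : Type} [CommRing k] [CommRing H] [HopfAlgebra k H] {Sinv : H →ₗ[k] H}

theorem HomCoactChar.evalTensor_eq {A B : YDCat k H Sinv}
    {ρQ : (A.M →ₗ[H] B.M) →ₗ[k] (A.M →ₗ[H] B.M) ⊗[k] H} (hQ : HomCoactChar Sinv A B ρQ)
    (f : A.M →ₗ[H] B.M) :
    evalTensor (ρQ f) = liftRightMul (B.ρ ∘ₗ f.restrictScalars k) ∘ₗ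
      LinearMap.lTensor A.M (HopfAlgebra.antipode k) ∘ₗ A.ρ := by
  ext a
  obtain ⟨t, a₀, a₁, ha⟩ := exists_sum_range_tmul_eq (A.ρ a)
  rw [evalTensor_apply, hQ f a t a₀ a₁ ha, LinearMap.comp_apply, LinearMap.comp_apply, ← ha]
  simp [liftRightMul_tmul]

theorem TensorCoactChar.rTensor_tmul {A B : YDCat k H Sinv}
    {ρT : (A.M ⊗[H] B.M) →ₗ[k] (A.M ⊗[H] B.M) ⊗[k] H} (hT : TensorCoactChar Sinv A B ρT)
    {P : Type} [AddCommGroup P] [Module k P] [Module H P] [IsScalarTower k H P]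
    [SMulCommClass H k P] {g : A.M ⊗[H] B.M →ₗ[k] P} {F : A.M →ₗ[k] B.M →ₗ[H] P}
    (hgF : ∀ a b, g (a ⊗ₜ b) = F a b) (a : A.M) (b : B.M) :
    LinearMap.rTensor H g (ρT (a ⊗ₜ b)) =
      liftRightMul (evalTensor (LinearMap.rTensor H F (A.ρ a))) (B.ρ b) := by
  obtain ⟨s, a₀, a₁, ha⟩ := exists_sum_range_tmul_eq (A.ρ a)
  obtain ⟨t, b₀, b₁, hb⟩ := exists_sum_range_tmul_eq (B.ρ b)
  rw [hT a b s t a₀ a₁ b₀ b₁ ha hb, ← ha, ← hb]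
  simp [liftRightMul_tmul, evalTensor_apply, evalAtH, hgF, Finset.sum_comm (s := s), mul_comm]

theorem isColin_hom_iff_isColin_tensor {M N P : YDCat k H Sinv}
    [Module.Finite H N.M] [Module.Projective H N.M]
    {ρQ : (N.M →ₗ[H] P.M) →ₗ[k] (N.M →ₗ[H] P.M) ⊗[k] H} (hQ : HomCoactChar Sinv N P ρQ)
    {ρT : (M.M ⊗[H] N.M) →ₗ[k] (M.M ⊗[H] N.M) ⊗[k] H} (hT : TensorCoactChar Sinv M N ρT)
    {F : M.M →ₗ[k] N.M →ₗ[H] P.M} {g : M.M ⊗[H] N.M →ₗ[k] P.M}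
    (hgF : ∀ m n, g (m ⊗ₜ n) = F m n) :
    IsColin k H M.ρ ρQ F ↔ IsColin k H ρT P.ρ g := by
  have key : ∀ m, ρQ (F m) = LinearMap.rTensor H F (M.ρ m) ↔
      ∀ n, P.ρ (g (m ⊗ₜ n)) = LinearMap.rTensor H g (ρT (m ⊗ₜ n)) := by
    intro m
    rw [← evalTensor_injective.eq_iff, hQ.evalTensor_eq,
      N.comod.liftRightMul_comp_antipode_eq_iff, LinearMap.ext_iff]
    simp only [LinearMap.comp_apply, LinearMap.restrictScalars_apply, hT.rTensor_tmul hgF, hgF]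
  simp only [IsColin, LinearMap.ext_iff (f := ρQ ∘ₗ F), LinearMap.comp_apply, key]
  exact ⟨fun h => linearMap_ext_tmul fun m n => h m n,
    fun h m n => LinearMap.congr_fun h (m ⊗ₜ n)⟩

end YetterDrinfeld

theorem homYD_tensor_adjunction_general
    (k H : Type) [CommRing k] [CommRing H] [HopfAlgebra k H]
    (Sinv : H →ₗ[k] H)
    (M N P : YDCat k H Sinv)
    (hNfin : Module.Finite H N.M) (hNproj : Module.Projective H N.M)
    (ρQ : (N.M →ₗ[H] P.M) →ₗ[k] (N.M →ₗ[H] P.M) ⊗[k] H)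
    (hQc : IsComod k H ρQ) (hQyd : IsYDCompat k H Sinv ρQ)
    (hQchar : HomCoactChar Sinv N P ρQ)
    (ρT : (M.M ⊗[H] N.M) →ₗ[k] (M.M ⊗[H] N.M) ⊗[k] H)
    (hTc : IsComod k H ρT) (hTyd : IsYDCompat k H Sinv ρT)
    (hTchar : TensorCoactChar Sinv M N ρT) :
    Nonempty
      (↥(homYD Sinv M (YDCat.mk (M := N.M →ₗ[H] P.M) ρQ hQc hQyd)) ≃ₗ[k]
        ↥(homYD Sinv (YDCat.mk (M := M.M ⊗[H] N.M) ρT hTc hTyd) P)) := by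
  refine ⟨LinearEquiv.symm
    { toFun g := ⟨curryH g.1 g.2.1, fun h m => (TensorProduct.curry _).map_smul h m,
        (isColin_hom_iff_isColin_tensor hQchar hTchar fun _ _ => rfl).2 g.2.2⟩
      invFun f := ⟨uncurryH f.1 f.2.1, fun h x => (TensorProduct.lift _).map_smul h x,
        (isColin_hom_iff_isColin_tensor hQchar hTchar fun _ _ => rfl).1 f.2.2⟩
      map_add' _ _ := rfl
      map_smul' _ _ := rfl
      left_inv g := Subtype.ext (linearMap_ext_tmul fun _ _ => rfl)
      right_inv _ := rfl }⟩

/-- Lemma 2.1(1). Let `H` be a commutative Hopf algebra with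
bijective antipode over a commutative ring `k`, faithfully flat over `k`, and let
`M`, `N`, `P` be Yetter-Drinfeld modules with `N` finitely generated projective as a
left `H`-module. Then `Hom_H^H(M, Hom_H(N, P)) ≅ Hom_H^H(M ⊗_H N, P)` as
`k`-modules (where `Hom_H(N, P)` and `M ⊗_H N` carry their canonical
Yetter-Drinfeld structures, characterized by the hypotheses below). -/
theorem homYD_tensor_adjunction
    (k H : Type) [CommRing k] [CommRing H] [HopfAlgebra k H]
    [Module.FaithfullyFlat k H]
    (Sinv : H →ₗ[k] H)
    (hS1 : ∀ h : H, Sinv (HopfAlgebra.antipode (R := k) (A := H) h) = h)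
    (hS2 : ∀ h : H, HopfAlgebra.antipode (R := k) (A := H) (Sinv h) = h)
    (M N P : YDCat k H Sinv)
    (hNfin : Module.Finite H N.M) (hNproj : Module.Projective H N.M)
    (ρQ : (N.M →ₗ[H] P.M) →ₗ[k] (N.M →ₗ[H] P.M) ⊗[k] H)
    (hQc : IsComod k H ρQ) (hQyd : IsYDCompat k H Sinv ρQ)
    (hQchar : HomCoactChar Sinv N P ρQ)
    (ρT : (M.M ⊗[H] N.M) →ₗ[k] (M.M ⊗[H] N.M) ⊗[k] H)
    (hTc : IsComod k H ρT) (hTyd : IsYDCompat k H Sinv ρT)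
    (hTchar : TensorCoactChar Sinv M N ρT) :
    Nonempty
      (↥(homYD Sinv M (YDCat.mk (M := N.M →ₗ[H] P.M) ρQ hQc hQyd)) ≃ₗ[k]
        ↥(homYD Sinv (YDCat.mk (M := M.M ⊗[H] N.M) ρT hTc hTyd) P)) :=
  homYD_tensor_adjunction_general k H Sinv M N P hNfin hNproj ρQ hQc hQyd hQchar ρT hTc hTyd hTchar

end YDPaper
end
end
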